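/- arXiv:2007.06242 — 10 statements merged into one kernel-verified Lean document; each statement's English description precedes it below -/
import Mathlib

section
/- Let G be an edge-weighted complete bipartite graph between agents [n] and goods [m] with m ≥ n, where the weight of edge (i,g) is v_i(g) ≥ 0. For each agent i, let G_i be a set of n goods maximizing ∑_{g ∈ G_i} v_i(g) over all n-element subsets of goods. Then there exists a matching π assigning a distinct good π(i) to each agent i such that ∑_{i∈[n]} v_i(π(i)) ≥ (1/n) ∑_{i∈[n]} ∑_{g ∈ G_i} v_i(g). -/
/-!
Spreading each agent's mass uniformly over its `n` goods, `P i g = [g ∈ G i] / n`, gives a matrix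
with unit row sums and column sums at most `1` whose `v`-weighted total is `(1/n) ∑ᵢ v_i(G_i)`.
Padding it with dummy agents to a doubly stochastic matrix and applying Birkhoff's theorem writes
it as a convex combination of perfect matchings, and one of them has at least the average weight.
-/

open Finset

theorem exists_perm_sum_mul_le_of_mem_doublyStochastic {β : Type*} [Fintype β]
    [DecidableEq β] {M : Matrix β β ℝ} (hM : M ∈ doublyStochastic ℝ β) (c : β → β → ℝ) :
    ∃ σ : Equiv.Perm β, ∑ x, ∑ y, M x y * c x y ≤ ∑ x, c x (σ x) := by
  let f : Matrix β β ℝ →ₗ[ℝ] ℝ :=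
    { toFun := fun A => ∑ x, ∑ y, A x y * c x y
      map_add' := fun A B => by simp only [Matrix.add_apply, add_mul, sum_add_distrib]
      map_smul' := fun r A => by
        simp only [Matrix.smul_apply, smul_eq_mul, mul_assoc, mul_sum, RingHom.id_apply] }
  rw [← SetLike.mem_coe, doublyStochastic_eq_convexHull_permMatrix] at hM
  obtain ⟨_, ⟨σ, rfl⟩, hσ⟩ :=
    (f.convexOn convex_univ).exists_ge_of_mem_convexHull (Set.subset_univ _) hM
  refine ⟨σ, hσ.trans_eq ?_⟩
  simp [f, Equiv.Perm.permMatrix, PEquiv.toMatrix_apply, Equiv.toPEquiv_apply]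

section Substochastic

variable {ι α : Type*} [Fintype ι] [Fintype α] {P : ι → α → ℝ}

theorem card_le_card_of_sum_row_eq_one_of_sum_col_le_one (hrow : ∀ i, ∑ a, P i a = 1)
    (hcol : ∀ a, ∑ i, P i a ≤ 1) : Fintype.card ι ≤ Fintype.card α := by
  have : (Fintype.card ι : ℝ) ≤ Fintype.card α := calc
    (Fintype.card ι : ℝ) = ∑ i, ∑ a, P i a := by simp [hrow]
    _ = ∑ a, ∑ i, P i a := sum_comm
    _ ≤ ∑ _a : α, (1 : ℝ) := sum_le_sum fun a _ => hcol a
    _ = Fintype.card α := by simp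
  exact_mod_cast this

theorem exists_injective_sum_mul_le_of_sum_col_le_one (hP : ∀ i a, 0 ≤ P i a)
    (hrow : ∀ i, ∑ a, P i a = 1) (hcol : ∀ a, ∑ i, P i a ≤ 1) (c : ι → α → ℝ) :
    ∃ π : ι → α, Function.Injective π ∧ ∑ i, ∑ a, P i a * c i a ≤ ∑ i, c i (π i) := by
  classical
  set k := Fintype.card α - Fintype.card ι
  have hcard := card_le_card_of_sum_row_eq_one_of_sum_col_le_one hrow hcol
  let e : ι ⊕ Fin k ≃ α := Fintype.equivOfCardEq (by simp [k]; omega)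
  set slack : α → ℝ := fun a => 1 - ∑ i, P i a
  have slack_nonneg (a : α) : 0 ≤ slack a := sub_nonneg.2 (hcol a)
  have sum_slack : ∑ a, slack a = k := by
    simp only [slack, sum_sub_distrib, sum_const, card_univ, nsmul_eq_mul, mul_one]
    rw [sum_comm, sum_congr rfl fun i _ => hrow i]
    simp [k, Nat.cast_sub hcard]
  have mul_slack_div (a : α) : (k : ℝ) * (slack a / k) = slack a := by
    rcases eq_or_ne (k : ℝ) 0 with hk | hk
    · rw [hk] at sum_slack
      simp [(sum_eq_zero_iff_of_nonneg fun a _ => slack_nonneg a).1 sum_slack a]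
    · exact mul_div_cancel₀ _ hk
  -- the `k` dummy agents share the unused capacity of each good equally
  let M : Matrix (ι ⊕ Fin k) (ι ⊕ Fin k) ℝ :=
    fun x y => Sum.elim (fun i => P i (e y)) (fun _ => slack (e y) / k) x
  have hM : M ∈ doublyStochastic ℝ (ι ⊕ Fin k) := by
    refine mem_doublyStochastic_iff_sum.2 ⟨?_, ?_, fun y => ?_⟩
    · rintro (i | j) y
      exacts [hP i (e y), div_nonneg (slack_nonneg _) k.cast_nonneg]
    · rintro (i | j)
      · simpa [M, e.sum_comp (P i)] using hrow i
      · have hk : (k : ℝ) ≠ 0 := Nat.cast_ne_zero.2 (Fin.pos j).ne'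
        simp [M, ← sum_div, e.sum_comp slack, sum_slack, hk]
    · simp [M, Fintype.sum_sum_type, mul_slack_div, slack]
  let c' : ι ⊕ Fin k → ι ⊕ Fin k → ℝ := fun x y => Sum.elim (fun i => c i (e y)) 0 x
  have hweight : ∑ x, ∑ y, M x y * c' x y = ∑ i, ∑ a, P i a * c i a := by
    rw [Fintype.sum_sum_type]
    simp only [M, c', Sum.elim_inl, Sum.elim_inr, Pi.zero_apply, mul_zero, sum_const_zero,
      add_zero]
    exact sum_congr rfl fun i _ => e.sum_comp fun a => P i a * c i a
  obtain ⟨σ, hσ⟩ := exists_perm_sum_mul_le_of_mem_doublyStochastic hM c'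
  refine ⟨fun i => e (σ (.inl i)), fun i j hij => Sum.inl_injective (σ.injective (e.injective hij)),
    ?_⟩
  rw [hweight] at hσ
  simpa [c', Fintype.sum_sum_type] using hσ

end Substochastic

theorem exists_matching_welfare_ge_avg_top_n_general
    (n m : ℕ) (hn : 0 < n)
    (v : Fin n → Fin m → ℝ)
    (G : Fin n → Finset (Fin m))
    (hGcard : ∀ i, (G i).card = n) :
    ∃ π : Fin n → Fin m, Function.Injective π ∧
      (1 / (n : ℝ)) * ∑ i, ∑ g ∈ G i, v i g ≤ ∑ i, v i (π i) := by
  classical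
  have hn' : (n : ℝ) ≠ 0 := Nat.cast_ne_zero.2 hn.ne'
  let P : Fin n → Fin m → ℝ := fun i g => if g ∈ G i then (n : ℝ)⁻¹ else 0
  have hrow (i : Fin n) : ∑ g, P i g = 1 := by
    simp [P, sum_ite_mem, hGcard, hn']
  have hcol (g : Fin m) : ∑ i, P i g ≤ 1 := calc
    ∑ i, P i g ≤ ∑ _i : Fin n, (n : ℝ)⁻¹ := sum_le_sum fun i _ => by
      simp only [P]; split_ifs <;> simp
    _ = 1 := by simp [hn']
  have hweight : ∑ i, ∑ g, P i g * v i g = 1 / (n : ℝ) * ∑ i, ∑ g ∈ G i, v i g := by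
    simp [P, ite_mul, sum_ite_mem, mul_sum]
  obtain ⟨π, hπ, hle⟩ := exists_injective_sum_mul_le_of_sum_col_le_one
    (fun i g => by simp only [P]; split_ifs <;> positivity) hrow hcol v
  exact ⟨π, hπ, hweight ▸ hle⟩

/-- In a weighted complete bipartite graph between agents [n] and goods [m]
(m ≥ n) with nonnegative weights `v i g`, if `G i` is a set of `n` goods maximizing
agent `i`'s total value among all `n`-element subsets, then there is a matching `π`
(an injective assignment of distinct goods to agents) with total weight at least
(1/n)·∑_i ∑_{g ∈ G i} v i g. -/
theorem exists_matching_welfare_ge_avg_top_n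
    (n m : ℕ) (hn : 0 < n) (hm : n ≤ m)
    (v : Fin n → Fin m → ℝ) (hv : ∀ i g, 0 ≤ v i g)
    (G : Fin n → Finset (Fin m))
    (hGcard : ∀ i, (G i).card = n)
    (hGmax : ∀ i, ∀ S : Finset (Fin m), S.card = n →
      ∑ g ∈ S, v i g ≤ ∑ g ∈ G i, v i g) :
    ∃ π : Fin n → Fin m, Function.Injective π ∧
      (1 / (n : ℝ)) * ∑ i, ∑ g ∈ G i, v i g ≤ ∑ i, v i (π i) :=
  exists_matching_welfare_ge_avg_top_n_general n m hn v G hGcard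
end

section
/- For every fair division instance with n agents having monotone subadditive valuations v_1,...,v_n over m indivisible goods, there exists an EF1 allocation B = (B_1,...,B_n) with social welfare ∑_{i∈[n]} v_i(B_i) ≥ (1/(2n)) ∑_{i∈[n]} v_i([m]). -/
/-!
Call an allocation *strongly EF1* if from every nonempty bundle a single good can be removed that
eliminates the envy of all agents at once. The envy-cycle procedure of Lipton et al. preserves
this property: rotating bundles along an envy cycle only raises values, and a new good goes to an
unenvied agent, whose old bundle is then envied by nobody. Hence every strongly EF1 partial
allocation extends to a complete one in which no agent loses value.

Take a complete strongly EF1 allocation `B` of maximum welfare and let `γⱼ` be the common witness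
of bundle `j`. Subadditivity gives `vᵢ(Bⱼ) ≤ vᵢ(Bᵢ) + vᵢ(γⱼ)`, so
`vᵢ([m]) ≤ n vᵢ(Bᵢ) + ∑ⱼ vᵢ(γⱼ)`. For every shift `k`, handing `γᵢ₊ₖ` to agent `i` is
strongly EF1 and extends to a complete strongly EF1 allocation, so `∑ᵢ vᵢ(γᵢ₊ₖ)` is at most
the welfare of `B`. Summing over the `n` shifts gives `∑ᵢ vᵢ([m]) ≤ 2n ∑ᵢ vᵢ(Bᵢ)`.
-/

open Finset Function

theorem Finset.sum_sum_le_card_mul_of_forall_sum_add_le {G : Type*} [AddGroup G] [Fintype G]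
    {x : G → G → ℝ} {M : ℝ} (h : ∀ k, ∑ i, x i (i + k) ≤ M) :
    ∑ i, ∑ j, x i j ≤ Fintype.card G * M := calc
  ∑ i, ∑ j, x i j = ∑ i, ∑ k, x i (i + k) :=
    sum_congr rfl fun i _ => (Equiv.sum_comp (Equiv.addLeft i) (x i)).symm
  _ = ∑ k, ∑ i, x i (i + k) := sum_comm
  _ ≤ ∑ _k : G, M := sum_le_sum fun k _ => h k
  _ = Fintype.card G * M := by rw [sum_const, card_univ, nsmul_eq_mul]

theorem Finset.le_sum_of_subadditive_biUnion {ι α : Type*} [DecidableEq α] (f : Finset α → ℝ)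
    (h0 : f ∅ = 0) (hsub : ∀ A B, f (A ∪ B) ≤ f A + f B) (s : Finset ι) (B : ι → Finset α) :
    f (s.biUnion B) ≤ ∑ j ∈ s, f (B j) := by
  classical
  induction s using Finset.induction_on with
  | empty => simp [h0]
  | insert j s hj ih =>
    rw [biUnion_insert, sum_insert hj]
    exact (hsub _ _).trans (by linarith)

theorem Finset.subset_update_insert {ι α : Type*} [DecidableEq ι] [DecidableEq α]
    (D : ι → Finset α) (k : ι) (g : α) (i : ι) : D i ⊆ update D k (insert g (D k)) i := by
  by_cases hi : i = k <;> simp [hi]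

theorem exists_perm_le_and_lt_of_forall_exists_lt {ι : Type*} [Finite ι] [Nonempty ι]
    (u : ι → ι → ℝ) (h : ∀ k, ∃ i, u i i < u i k) :
    ∃ σ : Equiv.Perm ι, (∀ i, u i i ≤ u i (σ i)) ∧ ∃ i, u i i < u i (σ i) := by
  classical
  choose f hf using h
  -- `f` is a bijection of its periodic points, so `σ (f k) = k` there and `σ = id` elsewhere
  -- defines a permutation; by the choice of `f` it is a strict improvement at periodic points.
  obtain ⟨a, b, hab, hfab⟩ := Set.finite_univ.exists_lt_map_eq_of_forall_mem
    (f := fun k : ℕ => f^[k] (Classical.arbitrary ι)) fun _ => Set.mem_univ _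
  have hper : f^[a] (Classical.arbitrary ι) ∈ periodicPts f := by
    refine mk_mem_periodicPts (n := b - a) (by omega) ?_
    simp only [IsPeriodicPt, IsFixedPt, ← iterate_add_apply, Nat.sub_add_cancel hab.le]
    exact hfab.symm
  set e := (bijOn_periodicPts f).equiv
  have hlt : ∀ i (hi : i ∈ periodicPts f), u i i < u i (Equiv.Perm.ofSubtype e.symm i) := by
    intro i hi
    rw [Equiv.Perm.ofSubtype_apply_of_mem _ hi]
    have hfk : f (e.symm ⟨i, hi⟩) = i := congrArg Subtype.val (e.apply_symm_apply ⟨i, hi⟩)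
    simpa only [hfk] using hf (e.symm ⟨i, hi⟩)
  refine ⟨Equiv.Perm.ofSubtype e.symm, fun i => ?_, _, hlt _ hper⟩
  by_cases hi : i ∈ periodicPts f
  · exact (hlt i hi).le
  · rw [Equiv.Perm.ofSubtype_apply_of_not_mem _ hi]

namespace FairDivision

variable {ι α : Type*}

def IsPartition [Fintype ι] [DecidableEq α] (S : Finset α) (B : ι → Finset α) : Prop :=
  Pairwise (Disjoint on B) ∧ univ.biUnion B = S

def IsStrongEF1 [DecidableEq α] (v : ι → Finset α → ℝ) (B : ι → Finset α) : Prop :=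
  ∀ j, (B j).Nonempty → ∃ g ∈ B j, ∀ i, v i (B j \ {g}) ≤ v i (B i)

def welfare [Fintype ι] (v : ι → Finset α → ℝ) (B : ι → Finset α) : ℝ :=
  ∑ i, v i (B i)

section StrongEF1

variable [DecidableEq α] {v : ι → Finset α → ℝ} {D : ι → Finset α}

theorem IsStrongEF1.comp_perm (hD : IsStrongEF1 v D) {σ : Equiv.Perm ι}
    (hσ : ∀ i, v i (D i) ≤ v i (D (σ i))) : IsStrongEF1 v (D ∘ σ) := by
  intro j hj
  obtain ⟨g, hg, hgv⟩ := hD (σ j) hj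
  exact ⟨g, hg, fun i => (hgv i).trans (hσ i)⟩

theorem isStrongEF1_of_card_le_one (hmono : ∀ i, Monotone (v i)) (hD : ∀ j, #(D j) ≤ 1) :
    IsStrongEF1 v D := by
  intro j hj
  obtain ⟨g, hg⟩ := card_eq_one.1 ((hD j).antisymm hj.card_pos)
  exact ⟨g, by simp [hg], fun i => by simpa [hg] using hmono i (empty_subset (D i))⟩

theorem IsStrongEF1.exists_witness (hD : IsStrongEF1 v D) (hmono : ∀ i, Monotone (v i)) :
    ∃ W : ι → Finset α, (∀ j, W j ⊆ D j) ∧ (∀ j, #(W j) ≤ 1) ∧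
      ∀ i j, v i (D j \ W j) ≤ v i (D i) := by
  have hwit : ∀ j, ∃ W ⊆ D j, #W ≤ 1 ∧ ∀ i, v i (D j \ W) ≤ v i (D i) := by
    intro j
    rcases (D j).eq_empty_or_nonempty with hj | hj
    · refine ⟨∅, empty_subset _, by simp, fun i => ?_⟩
      simpa [hj] using hmono i (empty_subset (D i))
    · obtain ⟨g, hg, hgv⟩ := hD j hj
      exact ⟨{g}, singleton_subset_iff.2 hg, (card_singleton g).le, hgv⟩
  choose W hWD hW hWv using hwit
  exact ⟨W, hWD, hW, fun i j => hWv j i⟩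

theorem IsStrongEF1.update_insert [DecidableEq ι] (hD : IsStrongEF1 v D)
    (hmono : ∀ i, Monotone (v i)) {k : ι} (hk : ∀ i, v i (D k) ≤ v i (D i)) {g : α}
    (hg : g ∉ D k) : IsStrongEF1 v (update D k (insert g (D k))) := by
  have hle : ∀ i, v i (D i) ≤ v i (update D k (insert g (D k)) i) := fun i =>
    hmono i (subset_update_insert D k g i)
  intro j hj
  by_cases hjk : j = k
  · subst hjk
    refine ⟨g, by simp, fun i => ?_⟩
    simpa [sdiff_singleton_eq_erase, erase_insert hg] using (hk i).trans (hle i)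
  · rw [update_of_ne hjk] at hj ⊢
    obtain ⟨γ, hγ, hγv⟩ := hD j hj
    exact ⟨γ, hγ, fun i => (hγv i).trans (hle i)⟩

end StrongEF1

variable [Fintype ι] [DecidableEq α] {v : ι → Finset α → ℝ} {S : Finset α}
  {B D : ι → Finset α}

theorem IsPartition.subset (hD : IsPartition S D) (i : ι) : D i ⊆ S :=
  hD.2 ▸ subset_biUnion_of_mem D (mem_univ i)

theorem IsPartition.comp_perm (hD : IsPartition S D) (σ : Equiv.Perm ι) :
    IsPartition S (D ∘ σ) := by
  refine ⟨fun a b hab => hD.1 (σ.injective.ne hab), ?_⟩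
  ext x
  simp only [← hD.2, mem_biUnion, mem_univ, true_and, comp_apply]
  exact (σ.surjective.exists (p := fun j => x ∈ D j)).symm

theorem IsPartition.update_insert [DecidableEq ι] (hD : IsPartition S D) {g : α} (hg : g ∉ S)
    (k : ι) : IsPartition (insert g S) (update D k (insert g (D k))) := by
  have hmem : ∀ i x, x ∈ update D k (insert g (D k)) i ↔ x ∈ D i ∨ i = k ∧ x = g := by
    intro i x
    by_cases hi : i = k
    · subst hi; simp [or_comm]
    · simp [hi]
  refine ⟨fun a b hab => disjoint_left.2 fun x hxa hxb => ?_, ?_⟩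
  · rw [hmem] at hxa hxb
    rcases hxa with hxa | ⟨rfl, rfl⟩ <;> rcases hxb with hxb | ⟨hb, hxg⟩
    · exact disjoint_left.1 (hD.1 hab) hxa hxb
    · exact hg (hxg ▸ hD.subset a hxa)
    · exact hg (hD.subset b hxb)
    · exact hab hb.symm
  · ext x
    simp only [mem_biUnion, mem_univ, true_and, hmem, exists_or, ← hD.2, mem_insert]
    simp [or_comm]

variable [Fintype α]

theorem IsStrongEF1.exists_unenvied [Nonempty ι] (hD : IsPartition S D)
    (hDv : IsStrongEF1 v D) :
    ∃ E, IsPartition S E ∧ IsStrongEF1 v E ∧ (∀ i, v i (D i) ≤ v i (E i)) ∧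
      ∃ k, ∀ i, v i (E k) ≤ v i (E i) := by
  obtain ⟨E, ⟨hE, hEv, hDE⟩, hEmax⟩ := Set.exists_max_image
    {E | IsPartition S E ∧ IsStrongEF1 v E ∧ ∀ i, v i (D i) ≤ v i (E i)} (welfare v)
    (Set.toFinite _) ⟨D, hD, hDv, fun _ => le_rfl⟩
  refine ⟨E, hE, hEv, hDE, ?_⟩
  by_contra! henvied
  obtain ⟨σ, hle, i, hlt⟩ :=
    exists_perm_le_and_lt_of_forall_exists_lt (fun i j => v i (E j)) henvied
  have hσ : welfare v E < welfare v (E ∘ σ) :=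
    sum_lt_sum (fun i _ => hle i) ⟨i, mem_univ i, hlt⟩
  exact hσ.not_ge <|
    hEmax _ ⟨hE.comp_perm σ, hEv.comp_perm hle, fun i => (hDE i).trans (hle i)⟩

theorem IsStrongEF1.exists_extension [Nonempty ι] [DecidableEq ι]
    (hmono : ∀ i, Monotone (v i)) (R : Finset α) :
    ∀ {S : Finset α} {P : ι → Finset α}, Disjoint R S → IsPartition S P → IsStrongEF1 v P →
      ∃ B, IsPartition (R ∪ S) B ∧ IsStrongEF1 v B ∧ ∀ i, v i (P i) ≤ v i (B i) := by
  induction R using Finset.induction_on with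
  | empty => exact fun _ hP hPv => ⟨_, by rwa [empty_union], hPv, fun _ => le_rfl⟩
  | insert g R hgR ih =>
    intro S P hRS hP hPv
    rw [disjoint_insert_left] at hRS
    obtain ⟨D, hD, hDv, hPD, k, hk⟩ := hPv.exists_unenvied hP
    obtain ⟨B, hB, hBv, hDB⟩ := ih (disjoint_insert_right.2 ⟨hgR, hRS.2⟩)
      (hD.update_insert hRS.1 k) (hDv.update_insert hmono hk fun hg => hRS.1 (hD.subset k hg))
    refine ⟨B, by rwa [insert_union, ← union_insert], hBv, fun i => ?_⟩
    exact (hPD i).trans ((hmono i (subset_update_insert D k g i)).trans (hDB i))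

theorem IsStrongEF1.exists_complete [Nonempty ι] [DecidableEq ι]
    (hmono : ∀ i, Monotone (v i)) {P : ι → Finset α} (hP : IsPartition S P)
    (hPv : IsStrongEF1 v P) :
    ∃ B, IsPartition univ B ∧ IsStrongEF1 v B ∧ ∀ i, v i (P i) ≤ v i (B i) := by
  simpa [sdiff_union_of_subset (subset_univ S)] using
    hPv.exists_extension hmono (univ \ S) sdiff_disjoint hP

theorem exists_isStrongEF1_forall_welfare_le [Nonempty ι] [DecidableEq ι]
    (hmono : ∀ i, Monotone (v i)) :
    ∃ B, IsPartition univ B ∧ IsStrongEF1 v B ∧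
      ∀ C, IsPartition univ C → IsStrongEF1 v C → welfare v C ≤ welfare v B := by
  have hempty : IsPartition (univ.biUnion fun _ : ι => ∅) fun _ : ι => (∅ : Finset α) :=
    ⟨fun _ _ _ => disjoint_empty_left _, rfl⟩
  obtain ⟨B₀, hB₀, hB₀v, -⟩ :=
    (isStrongEF1_of_card_le_one hmono fun _ => by simp).exists_complete hmono hempty
  obtain ⟨B, ⟨hB, hBv⟩, hBmax⟩ := Set.exists_max_image
    {B | IsPartition univ B ∧ IsStrongEF1 v B} (welfare v) (Set.toFinite _) ⟨B₀, hB₀, hB₀v⟩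
  exact ⟨B, hB, hBv, fun C hC hCv => hBmax C ⟨hC, hCv⟩⟩

theorem sum_comp_perm_le_welfare [Nonempty ι] [DecidableEq ι] (hmono : ∀ i, Monotone (v i))
    (hB : IsPartition univ B)
    (hBmax : ∀ C, IsPartition univ C → IsStrongEF1 v C → welfare v C ≤ welfare v B)
    {W : ι → Finset α} (hWB : ∀ j, W j ⊆ B j) (hW : ∀ j, #(W j) ≤ 1) (σ : Equiv.Perm ι) :
    ∑ i, v i (W (σ i)) ≤ welfare v B := by
  have hWσ : IsPartition (univ.biUnion (W ∘ σ)) (W ∘ σ) :=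
    ⟨fun a b hab => (hB.1 (σ.injective.ne hab)).mono (hWB _) (hWB _), rfl⟩
  obtain ⟨C, hC, hCv, hWC⟩ :=
    (isStrongEF1_of_card_le_one hmono fun j => hW (σ j)).exists_complete hmono hWσ
  exact (sum_le_sum fun i _ => hWC i).trans (hBmax C hC hCv)

theorem valuation_univ_le_card_mul_add_sum (hsub : ∀ i A B, v i (A ∪ B) ≤ v i A + v i B)
    (h0 : ∀ i, v i ∅ = 0) (hB : IsPartition univ B) {W : ι → Finset α} (hWB : ∀ j, W j ⊆ B j)
    (i : ι) (hWv : ∀ j, v i (B j \ W j) ≤ v i (B i)) :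
    v i univ ≤ Fintype.card ι * v i (B i) + ∑ j, v i (W j) := calc
  v i univ ≤ ∑ j, v i (B j) := hB.2 ▸ le_sum_of_subadditive_biUnion (v i) (h0 i) (hsub i) _ B
  _ ≤ ∑ j, (v i (B i) + v i (W j)) := sum_le_sum fun j _ => by
    calc v i (B j) = v i (B j \ W j ∪ W j) := by rw [sdiff_union_of_subset (hWB j)]
      _ ≤ v i (B j \ W j) + v i (W j) := hsub i _ _
      _ ≤ v i (B i) + v i (W j) := by linarith [hWv j]
  _ = Fintype.card ι * v i (B i) + ∑ j, v i (W j) := by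
    rw [sum_add_distrib, sum_const, card_univ, nsmul_eq_mul]

end FairDivision

/-- For every fair division instance with `n` agents having monotone
subadditive valuations (normalized at ∅) over `m` indivisible goods, there exists an
EF1 allocation `B` with social welfare at least `(1/(2n)) ∑ i, v i [m]`. -/
theorem exists_ef1_allocation_welfare_ge_avg
    (n m : ℕ) (hn : 0 < n)
    (v : Fin n → Finset (Fin m) → ℝ)
    (hmono : ∀ i, ∀ A B : Finset (Fin m), A ⊆ B → v i A ≤ v i B)
    (hsub : ∀ i, ∀ A B : Finset (Fin m), v i (A ∪ B) ≤ v i A + v i B)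
    (h0 : ∀ i, v i ∅ = 0) :
    ∃ B : Fin n → Finset (Fin m),
      (∀ a b : Fin n, a ≠ b → Disjoint (B a) (B b)) ∧
      Finset.univ.biUnion B = Finset.univ ∧
      (∀ i j : Fin n, (B j).Nonempty → ∃ g ∈ B j, v i (B j \ {g}) ≤ v i (B i)) ∧
      (1 / (2 * (n : ℝ))) * ∑ i, v i Finset.univ ≤ ∑ i, v i (B i) := by
  have : NeZero n := ⟨hn.ne'⟩
  have hmono' : ∀ i, Monotone (v i) := fun i A B => hmono i A B
  obtain ⟨B, hB, hBv, hBmax⟩ := FairDivision.exists_isStrongEF1_forall_welfare_le hmono'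
  obtain ⟨W, hWB, hW, hWv⟩ := hBv.exists_witness hmono'
  have hwit : ∑ i, ∑ j, v i (W j) ≤ n * FairDivision.welfare v B := by
    simpa using sum_sum_le_card_mul_of_forall_sum_add_le fun k =>
      FairDivision.sum_comp_perm_le_welfare hmono' hB hBmax hWB hW (Equiv.addRight k)
  have hval : ∑ i, v i univ ≤ n * FairDivision.welfare v B + ∑ i, ∑ j, v i (W j) := by
    simpa [FairDivision.welfare, mul_sum, sum_add_distrib] using sum_le_sum fun i _ =>
      FairDivision.valuation_univ_le_card_mul_add_sum hsub h0 hB hWB i (hWv i)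
  refine ⟨B, fun a b hab => hB.1 hab, hB.2, fun i j hj => ?_, ?_⟩
  · obtain ⟨g, hg, hgv⟩ := hBv j hj
    exact ⟨g, hg, hgv i⟩
  · rw [one_div, inv_mul_le_iff₀ (by positivity)]
    unfold FairDivision.welfare at hwit hval
    linarith
end

section
/- Maintaining EF1 under minimal envied prefix assignment: suppose P = (P_1,...,P_n) is a partial EF1 allocation, U = {g_a, g_{a+1},...,g_b} is a set of unallocated goods, and c ∈ [a,b] is the smallest index such that some agent k satisfies v_k(P_k) < v_k({g_a,...,g_c}). If agent k's bundle is replaced by {g_a,...,g_c} (her previous bundle P_k becoming unallocated), the resulting partial allocation is still EF1, assuming all valuations are monotone. -/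
open Finset

/-- Maintaining EF1 under minimal envied prefix assignment. Suppose `P` is
a partial EF1 allocation (pairwise disjoint bundles), the goods `{g_a, ..., g_b}` are
unallocated, and `c ∈ [a,b]` is minimal such that some agent `k` has
`v k (P k) < v k {g_a, ..., g_c}` (minimality: no agent prefers `{g_a, ..., g_{c-1}}`
to her bundle). If agent `k`'s bundle is replaced by `{g_a, ..., g_c}`, the resulting
partial allocation is still EF1. Valuations are monotone. -/
theorem ef1_preserved_by_minimal_envied_prefix
    (n m : ℕ) (v : Fin n → Finset (Fin m) → ℝ)
    (hmono : ∀ i, ∀ A B : Finset (Fin m), A ⊆ B → v i A ≤ v i B)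
    (P : Fin n → Finset (Fin m))
    (hdisj : ∀ a b : Fin n, a ≠ b → Disjoint (P a) (P b))
    (a b c : Fin m) (hac : a ≤ c) (hcb : c ≤ b)
    (hunalloc : ∀ j : Fin n, Disjoint (Finset.Icc a b) (P j))
    (hEF1 : ∀ i j : Fin n, (P j).Nonempty →
      ∃ g ∈ P j, v i (P j \ {g}) ≤ v i (P i))
    (k : Fin n) (hk : v k (P k) < v k (Finset.Icc a c))
    (hmin : ∀ i : Fin n, v i (Finset.Icc a c \ {c}) ≤ v i (P i)) :
    ∀ i j : Fin n, ((Function.update P k (Finset.Icc a c)) j).Nonempty →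
      ∃ g ∈ (Function.update P k (Finset.Icc a c)) j,
        v i ((Function.update P k (Finset.Icc a c)) j \ {g})
          ≤ v i ((Function.update P k (Finset.Icc a c)) i) := by
  intro i j hne
  by_cases hj : j = k
  · subst hj
    refine ⟨c, ?_, ?_⟩
    · simp [Function.update_self, Finset.mem_Icc, hac]
    · rw [Function.update_self]
      by_cases hi : i = j
      · subst hi
        simp only [Function.update_self]
        exact le_trans (hmin i) hk.le
      · rw [Function.update_of_ne hi]
        exact hmin i
  · rw [Function.update_of_ne hj] at hne ⊢
    obtain ⟨g, hg, hle⟩ := hEF1 i j hne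
    by_cases hi : i = k
    · subst hi
      obtain ⟨g', hg', hle'⟩ := hEF1 i j hne
      refine ⟨g', hg', ?_⟩
      rw [Function.update_self]
      exact le_trans hle' hk.le
    · refine ⟨g, hg, ?_⟩
      rw [Function.update_of_ne hi]
      exact hle
end

section
/- The price of EF1 for unscaled additive valuations is Ω(n): for every ε > 0 there exists an instance with n agents and n goods with additive valuations in which the optimal social welfare is n², while every EF1 allocation has social welfare less than n + 1. -/
/-!
When every agent values every good positively, an agent with an empty bundle envies any
bundle of two or more goods even after removing one of its goods. So if some bundle of an
EF1 allocation of `n` goods among `n` agents were empty, every bundle would hold at most one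
good and some good would be left unallocated; hence every agent receives exactly one good.
In the instance at hand such an allocation has welfare `n + (n - 1) / n < n + 1`, whereas
giving every good to the first agent yields `n²`.
-/

open Finset

namespace FairDivision

variable {ι G : Type*}

def IsEF1 [DecidableEq G] (v : ι → G → ℝ) (A : ι → Finset G) : Prop :=
  ∀ i j, (A j).Nonempty → ∃ g ∈ A j, ∑ h ∈ A j \ {g}, v i h ≤ ∑ h ∈ A i, v i h

theorem card_le_one_of_isEF1_of_eq_empty [DecidableEq G] {v : ι → G → ℝ} {A : ι → Finset G}
    (hEF1 : IsEF1 v A) {i : ι} (hpos : ∀ g, 0 < v i g) (hi : A i = ∅) (j : ι) :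
    (A j).card ≤ 1 := by
  rcases (A j).eq_empty_or_nonempty with hj | hj
  · simp [hj]
  obtain ⟨g, -, hg⟩ := hEF1 i j hj
  rw [hi, sum_empty] at hg
  have hrest : A j \ {g} = ∅ :=
    not_nonempty_iff_eq_empty.mp fun hne => (sum_pos (fun h _ => hpos h) hne).not_ge hg
  calc (A j).card ≤ ({g} : Finset G).card := card_le_card (sdiff_eq_empty_iff_subset.mp hrest)
    _ = 1 := card_singleton g

theorem card_eq_one_of_isEF1 [Fintype ι] [Fintype G] [DecidableEq G]
    {v : ι → G → ℝ} {A : ι → Finset G} (hcard : Fintype.card G = Fintype.card ι)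
    (hdisj : ∀ a b, a ≠ b → Disjoint (A a) (A b)) (hcover : univ.biUnion A = univ)
    (hpos : ∀ i g, 0 < v i g) (hEF1 : IsEF1 v A) (i : ι) :
    (A i).card = 1 := by
  have hsum : ∑ j, (A j).card = Fintype.card ι := by
    rw [← card_biUnion fun a _ b _ hab => hdisj a b hab, hcover, card_univ, hcard]
  have hne : ∀ j, (A j).Nonempty := by
    classical
    by_contra! ⟨j₀, hj₀⟩
    have hlt : ∑ j, (A j).card < Fintype.card ι :=
      calc ∑ j, (A j).card = ∑ j ∈ univ.erase j₀, (A j).card :=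
            (sum_erase _ (by simp [hj₀])).symm
        _ ≤ ∑ _j ∈ univ.erase j₀, 1 :=
            sum_le_sum fun j _ => card_le_one_of_isEF1_of_eq_empty hEF1 (hpos j₀) hj₀ j
        _ < Fintype.card ι := by
            simpa [card_erase_of_mem] using Fintype.card_pos_iff.mpr ⟨j₀⟩
    omega
  have hones : ∑ _j : ι, 1 = ∑ j, (A j).card := by simp [hsum]
  exact ((sum_eq_sum_iff_of_le fun j _ => (hne j).card_pos).mp hones i (mem_univ i)).symm

theorem welfare_eq_sum_of_card_eq_one [Fintype ι] {v : ι → G → ℝ} {A : ι → Finset G}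
    {c : ι → ℝ} (hv : ∀ i g, v i g = c i) (hA : ∀ i, (A i).card = 1) :
    ∑ i, ∑ g ∈ A i, v i g = ∑ i, c i := by
  simp [hv, hA]

end FairDivision

open FairDivision in
/-- Price of EF1 for unscaled additive valuations is Ω(n). In the instance
with `n` agents and `n` goods where agent `1` (index 0) values every good at `n` and
every other agent values every good at `1/n`, the optimal social welfare is `n²`
(allocating everything to agent 1), while every EF1 allocation has social welfare
strictly less than `n + 1`. -/
theorem price_of_ef1_unscaled_lower_bound
    (n : ℕ) (hn : 1 ≤ n)
    (v : Fin n → Fin n → ℝ)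
    (hv : ∀ i g, v i g = if (i : ℕ) = 0 then (n : ℝ) else 1 / (n : ℝ)) :
    (∑ g : Fin n, v ⟨0, hn⟩ g = (n : ℝ) ^ 2) ∧
    (∀ A : Fin n → Finset (Fin n),
      (∀ a b : Fin n, a ≠ b → Disjoint (A a) (A b)) →
      Finset.univ.biUnion A = Finset.univ →
      (∀ i j : Fin n, (A j).Nonempty →
        ∃ g ∈ A j, ∑ h ∈ A j \ {g}, v i h ≤ ∑ h ∈ A i, v i h) →
      ∑ i, ∑ g ∈ A i, v i g < (n : ℝ) + 1) := by
  refine ⟨by simp [hv, sq], fun A hdisj hcover hEF1 => ?_⟩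
  have hpos : ∀ i g, 0 < v i g := fun i g => by rw [hv]; split_ifs <;> positivity
  have hone := card_eq_one_of_isEF1 rfl hdisj hcover hpos hEF1
  rw [welfare_eq_sum_of_card_eq_one hv hone]
  obtain ⟨m, rfl⟩ : ∃ m, n = m + 1 := ⟨n - 1, by omega⟩
  have hfrac : (m : ℝ) * (1 / (m + 1)) < 1 := by
    rw [mul_one_div, div_lt_one (by positivity)]
    linarith
  simpa [Fin.sum_univ_succ] using hfrac
end

section
/- For additive valuations, EF1 implies Prop1: if an allocation A = (A_1,...,A_n) of m goods to n agents satisfies EF1 and each v_i is additive, then for every agent i there exists a good g ∈ [m] such that v_i(A_i ∪ {g}) ≥ v_i([m])/n. -/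
open Finset

/-- For additive valuations, EF1 implies Prop1: if an allocation `A` of
`m ≥ 1` goods to `n` agents is EF1 under additive valuations with nonnegative item
values, then for every agent `i` there is a good `g` with
`v i (A i ∪ {g}) ≥ v i [m] / n`. -/
theorem ef1_implies_prop1_additive
    (n m : ℕ) (hn : 0 < n) (hm : 0 < m)
    (v : Fin n → Fin m → ℝ) (hv : ∀ i g, 0 ≤ v i g)
    (A : Fin n → Finset (Fin m))
    (hdisj : ∀ a b : Fin n, a ≠ b → Disjoint (A a) (A b))
    (hcover : Finset.univ.biUnion A = Finset.univ)
    (hEF1 : ∀ i j : Fin n, (A j).Nonempty →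
      ∃ g ∈ A j, ∑ h ∈ A j \ {g}, v i h ≤ ∑ h ∈ A i, v i h) :
    ∀ i : Fin n, ∃ g : Fin m,
      (∑ h : Fin m, v i h) / (n : ℝ) ≤ ∑ h ∈ A i ∪ {g}, v i h := by
  intro i
  haveI : NeZero m := ⟨hm.ne'⟩
  -- choose g* maximizing the value of A i ∪ {g}
  obtain ⟨g, -, hgmax⟩ := Finset.exists_max_image (Finset.univ : Finset (Fin m))
    (fun g => ∑ h ∈ A i ∪ {g}, v i h) ⟨0, Finset.mem_univ 0⟩
  refine ⟨g, ?_⟩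
  set M : ℝ := ∑ h ∈ A i ∪ {g}, v i h with hM
  have hMi : ∑ h ∈ A i, v i h ≤ M := by
    apply Finset.sum_le_sum_of_subset_of_nonneg Finset.subset_union_left
    intro x _ _; exact hv i x
  have hM0 : 0 ≤ M := Finset.sum_nonneg fun x _ => hv i x
  -- each bundle is worth at most M to i
  have key : ∀ j : Fin n, ∑ h ∈ A j, v i h ≤ M := by
    intro j
    rcases eq_or_ne j i with rfl | hji
    · exact hMi
    rcases (A j).eq_empty_or_nonempty with he | hne
    · simp [he, hM0]
    obtain ⟨gj, hgj, hle⟩ := hEF1 i j hne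
    have hsplit : ∑ h ∈ A j, v i h = ∑ h ∈ A j \ {gj}, v i h + v i gj := by
      rw [← Finset.erase_eq, Finset.sum_erase_add _ _ hgj]
    have hnotmem : gj ∉ A i := fun hmem =>
      (Finset.disjoint_left.mp (hdisj j i hji) hgj) hmem
    have : ∑ h ∈ A j, v i h ≤ ∑ h ∈ A i ∪ {gj}, v i h := by
      rw [hsplit, Finset.sum_union (by simpa using hnotmem)]
      simpa using add_le_add_right hle (v i gj)
    exact this.trans (hgmax gj (Finset.mem_univ gj))
  -- sum over all bundles equals total
  have htotal : ∑ h : Fin m, v i h = ∑ j : Fin n, ∑ h ∈ A j, v i h := by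
    rw [← hcover, Finset.sum_biUnion]
    intro a _ b _ hab
    exact hdisj a b hab
  have hnpos : (0 : ℝ) < n := Nat.cast_pos.mpr hn
  rw [div_le_iff₀ hnpos, htotal]
  calc ∑ j : Fin n, ∑ h ∈ A j, v i h ≤ ∑ _j : Fin n, M :=
        Finset.sum_le_sum fun j _ => key j
    _ = M * n := by simp [mul_comm]
end

section
/- Removing one agent and one good does not decrease maximin shares: for an additive valuation v over a finite set of goods G, an integer k ≥ 2, and any good g ∈ G, MMS^k(G) ≤ MMS^{k−1}(G \ {g}), where MMS^k(G) = max over partitions of G into k bundles of the minimum bundle value. -/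
open Finset

/-- `MMSval v k G` is the maximin share value: the supremum over all partitions of `G`
into `k` bundles of the minimum bundle value under the additive valuation with item
values `v`. -/
noncomputable def MMSval {m : ℕ} (v : Fin m → ℝ) (k : ℕ) (G : Finset (Fin m)) : ℝ :=
  ⨆ P : {P : Fin k → Finset (Fin m) //
      (∀ a b : Fin k, a ≠ b → Disjoint (P a) (P b)) ∧ Finset.univ.biUnion P = G},
    ⨅ j : Fin k, ∑ g ∈ P.1 j, v g

/-- Removing one agent and one good does not decrease maximin shares:
for an additive valuation with nonnegative item values `v`, `k ≥ 2`, and any `g ∈ G`,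
`MMS^k(G) ≤ MMS^{k−1}(G \ {g})`. -/
theorem mms_remove_agent_and_good
    (m k : ℕ) (hk : 2 ≤ k)
    (v : Fin m → ℝ) (hv : ∀ g, 0 ≤ v g)
    (G : Finset (Fin m)) (g : Fin m) (hg : g ∈ G) :
    MMSval v k G ≤ MMSval v (k - 1) (G.erase g) := by
  obtain ⟨n, rfl⟩ : ∃ n, k = n + 2 := ⟨k - 2, by omega⟩
  show MMSval v (n + 2) G ≤ MMSval v (n + 1) (G.erase g)
  unfold MMSval
  have hne : Nonempty {P : Fin (n+2) → Finset (Fin m) //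
      (∀ a b : Fin (n+2), a ≠ b → Disjoint (P a) (P b)) ∧ Finset.univ.biUnion P = G} := by
    refine ⟨⟨fun j => if j = 0 then G else ∅, ?_, ?_⟩⟩
    · intro a b hab
      by_cases ha : a = 0 <;> by_cases hb : b = 0 <;> simp_all
    · ext x
      simp only [Finset.mem_biUnion, Finset.mem_univ, true_and]
      constructor
      · rintro ⟨j, hj⟩; split at hj <;> simp_all
      · intro hx; exact ⟨0, by simp [hx]⟩
  have hbdd : BddAbove (Set.range fun (R : {P : Fin (n+1) → Finset (Fin m) //
      (∀ a b : Fin (n+1), a ≠ b → Disjoint (P a) (P b)) ∧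
        Finset.univ.biUnion P = G.erase g}) => ⨅ j : Fin (n+1), ∑ x ∈ R.1 j, v x) := by
    refine ⟨∑ x ∈ G.erase g, v x, ?_⟩
    rintro y ⟨⟨R, hRd, hRc⟩, rfl⟩
    have h0 : R 0 ⊆ G.erase g := by
      rw [← hRc]
      exact Finset.subset_biUnion_of_mem R (Finset.mem_univ 0)
    calc (⨅ j : Fin (n+1), ∑ x ∈ R j, v x) ≤ ∑ x ∈ R 0, v x :=
          ciInf_le (Set.finite_range _).bddBelow 0
      _ ≤ ∑ x ∈ G.erase g, v x :=
          Finset.sum_le_sum_of_subset_of_nonneg h0 (fun x _ _ => hv x)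
  apply ciSup_le
  rintro ⟨P, hdisj, hcov⟩
  have hgmem : g ∈ Finset.univ.biUnion P := hcov ▸ hg
  simp only [Finset.mem_biUnion, Finset.mem_univ, true_and] at hgmem
  obtain ⟨i, hi⟩ := hgmem
  set Q : Fin (n+1) → Finset (Fin m) :=
    fun j => P (i.succAbove j) ∪ (if j = 0 then (P i).erase g else ∅) with hQdef
  have hsane : ∀ j : Fin (n+1), i.succAbove j ≠ i := fun j => Fin.succAbove_ne i j
  have hQdisj : ∀ a b : Fin (n+1), a ≠ b → Disjoint (Q a) (Q b) := by
    intro a b hab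
    simp only [hQdef]
    rw [Finset.disjoint_union_left, Finset.disjoint_union_right, Finset.disjoint_union_right]
    refine ⟨⟨?_, ?_⟩, ?_, ?_⟩
    · exact hdisj _ _ (fun h => hab (Fin.succAbove_right_injective h))
    · by_cases hb : b = 0
      · simp only [hb, if_pos]
        exact Disjoint.mono_right (Finset.erase_subset _ _) (hdisj _ _ (hsane a))
      · simp [hb]
    · by_cases ha : a = 0
      · simp only [ha, if_pos]
        exact Disjoint.mono_left (Finset.erase_subset _ _) (hdisj _ _ (hsane b).symm)
      · simp [ha]
    · by_cases ha : a = 0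
      · have hb : b ≠ 0 := by rw [ha] at hab; exact hab.symm
        simp [hb]
      · simp [ha]
  have hQcov : Finset.univ.biUnion Q = G.erase g := by
    ext x
    simp only [Finset.mem_biUnion, Finset.mem_univ, true_and, hQdef, Finset.mem_union,
      Finset.mem_erase]
    constructor
    · rintro ⟨j, hx | hx⟩
      · refine ⟨?_, hcov ▸ Finset.mem_biUnion.mpr ⟨_, Finset.mem_univ _, hx⟩⟩
        rintro rfl
        exact (Finset.disjoint_left.mp (hdisj _ _ (hsane j)) hx) hi
      · split at hx
        · rw [Finset.mem_erase] at hx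
          exact ⟨hx.1, hcov ▸ Finset.mem_biUnion.mpr ⟨i, Finset.mem_univ _, hx.2⟩⟩
        · simp at hx
    · rintro ⟨hxg, hxG⟩
      have : x ∈ Finset.univ.biUnion P := hcov ▸ hxG
      simp only [Finset.mem_biUnion, Finset.mem_univ, true_and] at this
      obtain ⟨j', hj'⟩ := this
      by_cases hji : j' = i
      · exact ⟨0, Or.inr (by simp [Finset.mem_erase, hxg, hji ▸ hj'])⟩
      · obtain ⟨j, rfl⟩ := Fin.exists_succAbove_eq hji
        exact ⟨j, Or.inl hj'⟩
  have key : (⨅ j : Fin (n+2), ∑ x ∈ P j, v x) ≤ ⨅ j : Fin (n+1), ∑ x ∈ Q j, v x := by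
    apply le_ciInf
    intro j
    calc (⨅ j : Fin (n+2), ∑ x ∈ P j, v x) ≤ ∑ x ∈ P (i.succAbove j), v x :=
          ciInf_le (Set.finite_range _).bddBelow _
      _ ≤ ∑ x ∈ Q j, v x :=
          Finset.sum_le_sum_of_subset_of_nonneg Finset.subset_union_left (fun x _ _ => hv x)
  exact key.trans (le_ciSup hbdd ⟨Q, hQdisj, hQcov⟩)
end

section
/- Let v be an additive valuation over goods [m], let n ∈ ℕ, and let MMS = MMS^n([m]). Suppose bundles {B_a}_{a∈S} with S of size |S| ≤ n−1 are pairwise disjoint subsets of [m], and for each a ∈ S either |B_a| = 1 or v(B_a) ≤ MMS. Then v([m] \ ∪_{a∈S} B_a) ≥ (n − |S|) · MMS. -/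
/-!
Fix a partition `P` of the goods into `n` bundles that attains `MMS`, so every `P j` is worth at
least `MMS`. Each singleton bundle `B a` takes away a good lying in a single part of `P`; the
parts of `P` that are hit this way number at most the singleton bundles, and the untouched parts
are worth at least `MMS` each. Every other bundle is worth at most `MMS`, so it costs at most one
further share. Since `MMS ≥ 0`, losing at most `|S|` shares leaves at least `(n - |S|) · MMS`.
-/

open Finset

open Function

section Partition

variable {α ι κ : Type*} [DecidableEq α] {v : α → ℝ}

theorem sum_biUnion_le_sum_sum (hv : ∀ x, 0 ≤ v x) (s : Finset κ) (t : κ → Finset α) :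
    ∑ x ∈ s.biUnion t, v x ≤ ∑ i ∈ s, ∑ x ∈ t i, v x := by
  rw [← sup_eq_biUnion]
  refine apply_sup_le_sum (f := fun u : Finset α => ∑ x ∈ u, v x) sum_empty (fun {u w} => ?_) s
  rw [← sum_union_inter]
  exact le_add_of_nonneg_right (sum_nonneg fun x _ => hv x)

theorem sub_sum_le_sum_sdiff (hv : ∀ x, 0 ≤ v x) (s t : Finset α) :
    ∑ x ∈ s, v x - ∑ x ∈ t, v x ≤ ∑ x ∈ s \ t, v x := by
  have h : ∑ x ∈ s ∩ t, v x ≤ ∑ x ∈ t, v x :=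
    sum_le_sum_of_subset_of_nonneg inter_subset_right fun x _ _ => hv x
  linarith [sum_inter_add_sum_sdiff s t v]

theorem exists_card_le_subset_biUnion [DecidableEq ι] {P : ι → Finset α}
    (hcover : ∀ x, ∃ j, x ∈ P j) (X : Finset α) : ∃ T : Finset ι, #T ≤ #X ∧ X ⊆ T.biUnion P := by
  choose part hpart using hcover
  exact ⟨X.image part, card_image_le,
    fun x hx => mem_biUnion.2 ⟨part x, mem_image_of_mem _ hx, hpart x⟩⟩

variable [Fintype α] [Fintype ι] [DecidableEq ι] {P : ι → Finset α}

theorem compl_biUnion_eq_biUnion_compl (hdisj : Pairwise (Disjoint on P))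
    (hcover : ∀ x, ∃ j, x ∈ P j) (T : Finset ι) : univ \ T.biUnion P = (univ \ T).biUnion P := by
  ext x
  simp only [mem_sdiff, mem_univ, true_and, mem_biUnion, not_exists, not_and]
  constructor
  · intro hx
    obtain ⟨j, hj⟩ := hcover x
    exact ⟨j, fun hjT => hx j hjT hj, hj⟩
  · rintro ⟨j, hjT, hj⟩ i hiT hi
    obtain rfl : i = j := by_contra fun hij => disjoint_left.1 (hdisj hij) hi hj
    exact hjT hiT

theorem card_sub_card_mul_le_sum_compl_biUnion_parts {c : ℝ}
    (hdisj : Pairwise (Disjoint on P)) (hcover : ∀ x, ∃ j, x ∈ P j)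
    (hPc : ∀ j, c ≤ ∑ x ∈ P j, v x) (T : Finset ι) :
    ((Fintype.card ι : ℝ) - #T) * c ≤ ∑ x ∈ univ \ T.biUnion P, v x := by
  rw [compl_biUnion_eq_biUnion_compl hdisj hcover, sum_biUnion fun i _ j _ hij => hdisj hij,
    ← Nat.cast_sub (card_le_univ T), ← card_compl, compl_eq_univ_sdiff, ← nsmul_eq_mul]
  exact card_nsmul_le_sum _ _ _ fun j _ => hPc j

theorem card_sub_card_mul_le_sum_compl_biUnion_bundles [DecidableEq κ] {c : ℝ}
    (hv : ∀ x, 0 ≤ v x) (hdisj : Pairwise (Disjoint on P)) (hcover : ∀ x, ∃ j, x ∈ P j)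
    (hc : 0 ≤ c) (hPc : ∀ j, c ≤ ∑ x ∈ P j, v x) (S : Finset κ) (B : κ → Finset α)
    (hB : ∀ a ∈ S, #(B a) = 1 ∨ ∑ x ∈ B a, v x ≤ c) :
    ((Fintype.card ι : ℝ) - #S) * c ≤ ∑ x ∈ univ \ S.biUnion B, v x := by
  set S₁ := {a ∈ S | #(B a) = 1}
  set S₂ := {a ∈ S | ¬#(B a) = 1}
  obtain ⟨T, hT, hS₁T⟩ := exists_card_le_subset_biUnion hcover (S₁.biUnion B)
  have hTS₁ : #T ≤ #S₁ := hT.trans <| (card_biUnion_le_card_mul S₁ B 1 fun a ha =>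
    (mem_filter.1 ha).2.le).trans_eq (mul_one _)
  have hS₂ : ∑ x ∈ S₂.biUnion B, v x ≤ #S₂ * c := by
    refine (sum_biUnion_le_sum_sum hv S₂ B).trans ?_
    rw [← nsmul_eq_mul]
    refine sum_le_card_nsmul _ _ _ fun a ha => ?_
    obtain ⟨haS, hna⟩ := mem_filter.1 ha
    exact (hB a haS).resolve_left hna
  have hcover_S : S.biUnion B ⊆ T.biUnion P ∪ S₂.biUnion B := by
    rw [← filter_union_filter_not_eq (fun a => #(B a) = 1) S, union_biUnion]
    exact union_subset_union hS₁T subset_rfl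
  have hcard : (#T : ℝ) + #S₂ ≤ #S := by
    rw [← card_filter_add_card_filter_not (s := S) (fun a => #(B a) = 1)]
    exact_mod_cast Nat.add_le_add_right hTS₁ _
  calc ((Fintype.card ι : ℝ) - #S) * c ≤ ((Fintype.card ι : ℝ) - #T) * c - #S₂ * c := by
        nlinarith
    _ ≤ ∑ x ∈ univ \ T.biUnion P, v x - ∑ x ∈ S₂.biUnion B, v x :=
        sub_le_sub (card_sub_card_mul_le_sum_compl_biUnion_parts hdisj hcover hPc T) hS₂
    _ ≤ ∑ x ∈ (univ \ T.biUnion P) \ S₂.biUnion B, v x := sub_sum_le_sum_sdiff hv _ _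
    _ ≤ ∑ x ∈ univ \ S.biUnion B, v x := by
        rw [sdiff_sdiff_left]
        exact sum_le_sum_of_subset_of_nonneg (sdiff_subset_sdiff subset_rfl hcover_S)
          fun x _ _ => hv x

end Partition

theorem MMSval_nonneg {m : ℕ} {v : Fin m → ℝ} (hv : ∀ g, 0 ≤ v g) (k : ℕ) (G : Finset (Fin m)) :
    0 ≤ MMSval v k G :=
  Real.iSup_nonneg fun _ => Real.iInf_nonneg fun _ => sum_nonneg fun g _ => hv g

theorem exists_partition_forall_MMSval_le {m k : ℕ} (v : Fin m → ℝ) (hk : 0 < k)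
    (G : Finset (Fin m)) :
    ∃ P : Fin k → Finset (Fin m), Pairwise (Disjoint on P) ∧ univ.biUnion P = G ∧
      ∀ j, MMSval v k G ≤ ∑ g ∈ P j, v g := by
  let j₀ : Fin k := ⟨0, hk⟩
  have : Nonempty {P : Fin k → Finset (Fin m) //
      (∀ a b : Fin k, a ≠ b → Disjoint (P a) (P b)) ∧ univ.biUnion P = G} := by
    refine ⟨⟨fun j => if j = j₀ then G else ∅, fun a b hab => ?_, ?_⟩⟩
    · by_cases ha : a = j₀
      · simp [ha, Ne.symm (ha ▸ hab)]
      · simp [ha]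
    · ext g
      simp only [mem_biUnion, mem_univ, true_and]
      exact ⟨fun ⟨j, hj⟩ => by split_ifs at hj <;> simp_all, fun hg => ⟨j₀, by simpa⟩⟩
  obtain ⟨P, hP⟩ := exists_eq_ciSup_of_finite (f := fun P : {P : Fin k → Finset (Fin m) //
      (∀ a b : Fin k, a ≠ b → Disjoint (P a) (P b)) ∧ univ.biUnion P = G} =>
    ⨅ j : Fin k, ∑ g ∈ P.1 j, v g)
  refine ⟨P.1, fun a b hab => P.2.1 a b hab, P.2.2, fun j => ?_⟩
  rw [MMSval, ← hP]
  exact ciInf_le (Set.finite_range _).bddBelow j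

theorem value_of_remaining_goods_ge_general
    (n m : ℕ)
    (v : Fin m → ℝ) (hv : ∀ g, 0 ≤ v g)
    (S : Finset (Fin n))
    (B : Fin n → Finset (Fin m))
    (hB : ∀ a ∈ S, (B a).card = 1 ∨ ∑ g ∈ B a, v g ≤ MMSval v n Finset.univ) :
    ((n : ℝ) - S.card) * MMSval v n Finset.univ
      ≤ ∑ g ∈ Finset.univ \ S.biUnion B, v g := by
  have hMMS := MMSval_nonneg hv n univ
  rcases n.eq_zero_or_pos with rfl | hn
  · exact (mul_nonpos_of_nonpos_of_nonneg (by simp) hMMS).trans (sum_nonneg fun g _ => hv g)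
  obtain ⟨P, hdisj, hunion, hP⟩ := exists_partition_forall_MMSval_le v hn univ
  have hcover : ∀ g, ∃ j, g ∈ P j := fun g => by
    simpa using (hunion ▸ mem_univ g : g ∈ univ.biUnion P)
  simpa using card_sub_card_mul_le_sum_compl_biUnion_bundles hv hdisj hcover hMMS hP S B hB

/-- If pairwise disjoint bundles `B a` for `a ∈ S`, `|S| ≤ n − 1`, are
assigned so that each is either a singleton or worth at most `MMS = MMS^n([m])`, then
the unassigned goods are worth at least `(n − |S|) · MMS`. -/
theorem value_of_remaining_goods_ge
    (n m : ℕ)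
    (v : Fin m → ℝ) (hv : ∀ g, 0 ≤ v g)
    (S : Finset (Fin n)) (hS : S.card ≤ n - 1)
    (B : Fin n → Finset (Fin m))
    (hdisj : ∀ a ∈ S, ∀ b ∈ S, a ≠ b → Disjoint (B a) (B b))
    (hB : ∀ a ∈ S, (B a).card = 1 ∨ ∑ g ∈ B a, v g ≤ MMSval v n Finset.univ) :
    ((n : ℝ) - S.card) * MMSval v n Finset.univ
      ≤ ∑ g ∈ Finset.univ \ S.biUnion B, v g :=
  value_of_remaining_goods_ge_general n m v hv S B hB
end

section
/- For every fair division instance with n agents having additive valuations, there exists a 1/2-MMS allocation B with social welfare ∑_i v_i(B_i) ≥ (1/(3n)) ∑_{i∈[n]} v_i([m]). -/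
set_option maxHeartbeats 1000000

open Finset

section helpers
variable {m : ℕ}

lemma part_nonempty (v : Fin m → ℝ) {k : ℕ} (hk : 0 < k) (G : Finset (Fin m)) :
    Nonempty {P : Fin k → Finset (Fin m) //
      (∀ a b : Fin k, a ≠ b → Disjoint (P a) (P b)) ∧ Finset.univ.biUnion P = G} := by
  refine ⟨⟨fun j => if j = ⟨0, hk⟩ then G else ∅, ?_, ?_⟩⟩
  · intro a b hab
    by_cases ha : a = ⟨0, hk⟩ <;> by_cases hb : b = ⟨0, hk⟩ <;>
      simp_all [Finset.disjoint_empty_right, Finset.disjoint_empty_left]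
  · ext x
    simp only [Finset.mem_biUnion, Finset.mem_univ, true_and]
    constructor
    · rintro ⟨j, hj⟩
      split at hj
      · exact hj
      · simp at hj
    · intro hx; exact ⟨⟨0, hk⟩, by simp [hx]⟩

lemma bddBelow_fin {k : ℕ} (f : Fin k → ℝ) : BddBelow (Set.range f) :=
  (Set.finite_range f).bddBelow

lemma iInf_le_sum_of_partition (v : Fin m → ℝ) (hv : ∀ g, 0 ≤ v g) {k : ℕ} (hk : 0 < k)
    (G : Finset (Fin m))
    (P : {P : Fin k → Finset (Fin m) //
      (∀ a b : Fin k, a ≠ b → Disjoint (P a) (P b)) ∧ Finset.univ.biUnion P = G}) :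
    (⨅ j : Fin k, ∑ g ∈ P.1 j, v g) ≤ ∑ g ∈ G, v g := by
  haveI : Nonempty (Fin k) := ⟨⟨0, hk⟩⟩
  refine le_trans (ciInf_le (bddBelow_fin _) ⟨0, hk⟩) ?_
  refine Finset.sum_le_sum_of_subset_of_nonneg ?_ (fun g _ _ => hv g)
  conv_rhs => rw [← P.2.2]
  exact Finset.subset_biUnion_of_mem _ (Finset.mem_univ _)

lemma mms_bddAbove (v : Fin m → ℝ) (hv : ∀ g, 0 ≤ v g) {k : ℕ} (hk : 0 < k)
    (G : Finset (Fin m)) :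
    BddAbove (Set.range fun P : {P : Fin k → Finset (Fin m) //
      (∀ a b : Fin k, a ≠ b → Disjoint (P a) (P b)) ∧ Finset.univ.biUnion P = G} =>
      ⨅ j : Fin k, ∑ g ∈ P.1 j, v g) := by
  refine ⟨∑ g ∈ G, v g, ?_⟩
  rintro x ⟨P, rfl⟩
  exact iInf_le_sum_of_partition v hv hk G P

lemma mms_mul_le_sum (v : Fin m → ℝ) (hv : ∀ g, 0 ≤ v g) {k : ℕ} (hk : 0 < k)
    (G : Finset (Fin m)) :
    (k : ℝ) * MMSval v k G ≤ ∑ g ∈ G, v g := by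
  haveI : Nonempty (Fin k) := ⟨⟨0, hk⟩⟩
  haveI := part_nonempty v hk G
  rw [MMSval, mul_comm, ← le_div_iff₀ (by positivity)]
  refine ciSup_le ?_
  rintro ⟨P, hd, hc⟩
  rw [le_div_iff₀ (by positivity), mul_comm]
  have h1 : ∑ g ∈ G, v g = ∑ j : Fin k, ∑ g ∈ P j, v g := by
    rw [← hc]
    exact Finset.sum_biUnion (fun a _ b _ hab => hd a b hab)
  have h2 : (k : ℝ) * (⨅ j : Fin k, ∑ g ∈ P j, v g) ≤ ∑ j : Fin k, ∑ g ∈ P j, v g := by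
    calc (k : ℝ) * (⨅ j : Fin k, ∑ g ∈ P j, v g)
        = ∑ _j : Fin k, (⨅ j : Fin k, ∑ g ∈ P j, v g) := by
          rw [Finset.sum_const, Finset.card_univ, Fintype.card_fin, nsmul_eq_mul]
      _ ≤ ∑ j : Fin k, ∑ g ∈ P j, v g :=
          Finset.sum_le_sum (fun j _ => ciInf_le (bddBelow_fin _) j)
  rw [h1]; exact h2

lemma mms_erase (v : Fin m → ℝ) (hv : ∀ g, 0 ≤ v g) {k : ℕ} (hk : 0 < k)
    (G : Finset (Fin m)) {g : Fin m} (hg : g ∈ G) :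
    MMSval v (k + 1) G ≤ MMSval v k (G.erase g) := by
  haveI := part_nonempty v (Nat.succ_pos k) G
  refine ciSup_le ?_
  rintro ⟨P, hd, hc⟩
  obtain ⟨j0, -, hj0⟩ : ∃ j ∈ Finset.univ, g ∈ P j := by
    rw [← Finset.mem_biUnion]; rw [hc]; exact hg
  set Q : Fin k → Finset (Fin m) :=
    fun t => P (j0.succAbove t) ∪ (if t = ⟨0, hk⟩ then (P j0).erase g else ∅) with hQ
  have hsub : ∀ j, P j ⊆ G := by
    intro j; conv_rhs => rw [← hc]
    exact Finset.subset_biUnion_of_mem _ (Finset.mem_univ _)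
  have hQd : ∀ a b : Fin k, a ≠ b → Disjoint (Q a) (Q b) := by
    intro a b hab
    have hinj : j0.succAbove a ≠ j0.succAbove b := fun h => hab (Fin.succAbove_right_injective h)
    refine Finset.disjoint_union_left.2 ⟨Finset.disjoint_union_right.2 ⟨?_, ?_⟩,
      Finset.disjoint_union_right.2 ⟨?_, ?_⟩⟩
    · exact hd _ _ hinj
    · split
      · exact Finset.disjoint_of_subset_right (Finset.erase_subset _ _)
          (hd _ _ (Fin.succAbove_ne _ _))
      · exact Finset.disjoint_empty_right _
    · split
      · exact Finset.disjoint_of_subset_left (Finset.erase_subset _ _)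
          ((hd _ _ (Fin.succAbove_ne j0 b)).symm)
      · exact Finset.disjoint_empty_left _
    · split
      · split
        · simp_all
        · exact Finset.disjoint_empty_right _
      · exact Finset.disjoint_empty_left _
  have hQc : Finset.univ.biUnion Q = G.erase g := by
    ext a
    simp only [hQ, Finset.mem_biUnion, Finset.mem_univ, true_and, Finset.mem_union,
      Finset.mem_erase]
    constructor
    · rintro ⟨t, ht⟩
      rcases ht with ht | ht
      · refine ⟨?_, hsub _ ht⟩
        rintro rfl
        exact absurd hj0 (Finset.disjoint_left.1 (hd _ _ (Fin.succAbove_ne j0 t)) ht)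
      · split at ht
        · exact ⟨(Finset.mem_erase.1 ht).1, hsub _ (Finset.mem_erase.1 ht).2⟩
        · simp at ht
    · rintro ⟨hag, haG⟩
      have : a ∈ Finset.univ.biUnion P := by rw [hc]; exact haG
      obtain ⟨j, -, hj⟩ := Finset.mem_biUnion.1 this
      by_cases hjj : j = j0
      · exact ⟨⟨0, hk⟩, Or.inr (by simp [Finset.mem_erase, hag, hjj ▸ hj])⟩
      · obtain ⟨t, ht⟩ := Fin.exists_succAbove_eq hjj
        exact ⟨t, Or.inl (ht ▸ hj)⟩
  refine le_trans ?_ (le_ciSup (mms_bddAbove v hv hk (G.erase g)) ⟨Q, hQd, hQc⟩)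
  haveI : Nonempty (Fin k) := ⟨⟨0, hk⟩⟩
  refine le_ciInf (fun t => ?_)
  refine le_trans (ciInf_le (bddBelow_fin _) (j0.succAbove t)) ?_
  exact Finset.sum_le_sum_of_subset_of_nonneg Finset.subset_union_left (fun x _ _ => hv x)

end helpers

lemma bagfill {n m : ℕ} (v : Fin n → Fin m → ℝ) (hv : ∀ i g, 0 ≤ v i g) :
    ∀ (k : ℕ) (A : Finset (Fin n)) (R : Finset (Fin m)) (τ : Fin n → ℝ),
    A.card = k + 1 → (∀ i ∈ A, 0 ≤ τ i) → (∀ i ∈ A, ∀ g ∈ R, v i g ≤ τ i) →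
    (∀ i ∈ A, (2 * (k : ℝ) + 1) * τ i ≤ ∑ g ∈ R, v i g) →
    ∃ B : Fin n → Finset (Fin m), (∀ i, B i ⊆ R) ∧
      (∀ a b : Fin n, a ≠ b → Disjoint (B a) (B b)) ∧
      (∀ i ∉ A, B i = ∅) ∧ A.biUnion B = R ∧ ∀ i ∈ A, τ i ≤ ∑ g ∈ B i, v i g := by
  intro k
  induction k with
  | zero =>
    intro A R τ hA hτ hitem hbud
    obtain ⟨j, rfl⟩ := Finset.card_eq_one.1 hA
    refine ⟨fun i => if i = j then R else ∅, ?_, ?_, ?_, ?_, ?_⟩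
    · intro i; dsimp only; split <;> simp
    · intro a b hab
      by_cases ha : a = j <;> by_cases hb : b = j <;> simp_all
    · intro i hi; simp only [Finset.mem_singleton] at hi; simp [hi]
    · simp
    · intro i hi
      simp only [Finset.mem_singleton] at hi
      subst hi
      have := hbud i (Finset.mem_singleton_self i)
      simpa using this
  | succ k ih =>
    intro A R τ hA hτ hitem hbud
    -- choose minimal cardinality pair (i, S) with τ i ≤ v i S
    have hAne : A.Nonempty := Finset.card_pos.1 (by omega)
    obtain ⟨i0, hi0⟩ := hAne
    set C := (A ×ˢ R.powerset).filter (fun p => τ p.1 ≤ ∑ g ∈ p.2, v p.1 g) with hC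
    have hCne : C.Nonempty := by
      refine ⟨(i0, R), ?_⟩
      simp only [hC, Finset.mem_filter, Finset.mem_product, Finset.mem_powerset]
      refine ⟨⟨hi0, Finset.Subset.refl R⟩, ?_⟩
      have h1 := hbud i0 hi0
      have h2 := hτ i0 hi0
      nlinarith [h1, h2]
    obtain ⟨⟨i, S⟩, hmem, hmin⟩ := Finset.exists_min_image C (fun p => p.2.card) hCne
    simp only [hC, Finset.mem_filter, Finset.mem_product, Finset.mem_powerset] at hmem
    obtain ⟨⟨hiA, hSR⟩, hiS⟩ := hmem
    -- for other agents, v l S ≤ 2 τ l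
    have hsmall : ∀ l ∈ A, l ≠ i → ∑ g ∈ S, v l g ≤ 2 * τ l := by
      intro l hl hli
      rcases Finset.eq_empty_or_nonempty S with rfl | ⟨g, hgS⟩
      · simp only [Finset.sum_empty]
        have := hτ l hl; linarith
      · have hnot : ¬ (τ l ≤ ∑ x ∈ S.erase g, v l x) := by
          intro hcon
          have hmemC : (l, S.erase g) ∈ C := by
            simp only [hC, Finset.mem_filter, Finset.mem_product, Finset.mem_powerset]
            exact ⟨⟨hl, (Finset.erase_subset _ _).trans hSR⟩, hcon⟩
          have := hmin _ hmemC
          simp only at this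
          have hlt := Finset.card_erase_lt_of_mem hgS
          omega
        push_neg at hnot
        have hsum : ∑ x ∈ S.erase g, v l x + v l g = ∑ x ∈ S, v l x :=
          Finset.sum_erase_add _ _ hgS
        have hgle := hitem l hl g (hSR hgS)
        linarith
    -- recurse
    have hA' : (A.erase i).card = k + 1 := by
      rw [Finset.card_erase_of_mem hiA, hA]
      omega
    have hrec := ih (A.erase i) (R \ S) τ hA'
      (fun l hl => hτ l (Finset.mem_of_mem_erase hl))
      (fun l hl g hg => hitem l (Finset.mem_of_mem_erase hl) g (Finset.mem_sdiff.1 hg).1)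
      ?_
    · obtain ⟨B', hB'sub, hB'disj, hB'out, hB'cov, hB'val⟩ := hrec
      refine ⟨fun x => if x = i then S else B' x, ?_, ?_, ?_, ?_, ?_⟩
      · intro x; dsimp only; split
        · exact hSR
        · exact (hB'sub x).trans (Finset.sdiff_subset)
      · intro a b hab
        by_cases ha : a = i <;> by_cases hb : b = i
        · exact absurd (ha.trans hb.symm) hab
        · simp only [ha, if_pos rfl, hb, if_neg hb]
          exact Finset.disjoint_of_subset_right (hB'sub b) (Finset.disjoint_sdiff)
        · simp only [ha, if_neg ha, hb, if_pos rfl]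
          exact Finset.disjoint_of_subset_left (hB'sub a) (Finset.disjoint_sdiff).symm
        · simp only [if_neg ha, if_neg hb]
          exact hB'disj a b hab
      · intro x hx
        have hxi : x ≠ i := fun h => hx (h ▸ hiA)
        dsimp only; rw [if_neg hxi]
        exact hB'out x (fun h => hx (Finset.mem_of_mem_erase h))
      · have : A = insert i (A.erase i) := (Finset.insert_erase hiA).symm
        rw [this, Finset.biUnion_insert, if_pos rfl]
        have heq : (A.erase i).biUnion (fun x => if x = i then S else B' x)
            = (A.erase i).biUnion B' := by
          refine Finset.biUnion_congr rfl (fun x hx => ?_)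
          rw [if_neg (Finset.ne_of_mem_erase hx)]
        rw [heq, hB'cov, Finset.union_sdiff_of_subset hSR]
      · intro l hl
        by_cases hli : l = i
        · subst hli; dsimp only; rw [if_pos rfl]; exact hiS
        · dsimp only; rw [if_neg hli]
          exact hB'val l (Finset.mem_erase.2 ⟨hli, hl⟩)
    · intro l hl
      have hlA := Finset.mem_of_mem_erase hl
      have hli := Finset.ne_of_mem_erase hl
      have h1 := hbud l hlA
      have h2 := hsmall l hlA hli
      have h3 : ∑ g ∈ R \ S, v l g = ∑ g ∈ R, v l g - ∑ g ∈ S, v l g := by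
        rw [eq_sub_iff_add_eq, Finset.sum_sdiff hSR]
      rw [h3]
      push_cast at h1 ⊢
      linarith

lemma main_alloc {n m : ℕ} (v : Fin n → Fin m → ℝ) (hv : ∀ i g, 0 ≤ v i g) :
    ∀ (k : ℕ) (A : Finset (Fin n)) (R : Finset (Fin m)), A.card = k + 1 →
    ∃ B : Fin n → Finset (Fin m), (∀ i, B i ⊆ R) ∧
      (∀ a b : Fin n, a ≠ b → Disjoint (B a) (B b)) ∧
      (∀ i ∉ A, B i = ∅) ∧ A.biUnion B = R ∧
      (∀ i ∈ A, MMSval (v i) (k + 1) R ≤ 2 * ∑ g ∈ B i, v i g) ∧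
      ∑ i ∈ A, ∑ g ∈ R, v i g ≤ 3 * ((k : ℝ) + 1) * ∑ i ∈ A, ∑ g ∈ B i, v i g := by
  intro k
  induction k with
  | zero =>
    intro A R hA
    obtain ⟨j, rfl⟩ := Finset.card_eq_one.1 hA
    have hRpos : (0:ℝ) ≤ ∑ g ∈ R, v j g := Finset.sum_nonneg (fun g _ => hv j g)
    refine ⟨fun i => if i = j then R else ∅, ?_, ?_, ?_, ?_, ?_, ?_⟩
    · intro i; dsimp only; split <;> simp
    · intro a b hab; by_cases ha : a = j <;> by_cases hb : b = j <;> simp_all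
    · intro i hi; simp only [Finset.mem_singleton] at hi; simp [hi]
    · simp
    · intro i hi
      simp only [Finset.mem_singleton] at hi; subst hi
      have h1 := mms_mul_le_sum (v i) (hv i) Nat.one_pos R
      simp only [Nat.cast_one, one_mul] at h1
      dsimp only
      rw [if_pos rfl]
      show MMSval (v i) 1 R ≤ 2 * ∑ g ∈ R, v i g
      linarith
    · simp only [Finset.sum_singleton, if_pos rfl]
      push_cast
      linarith
  | succ k ih =>
    intro A R hA
    set K : ℝ := (k : ℝ) + 2 with hKdef
    have hK2 : ((k+2 : ℕ) : ℝ) = K := by rw [hKdef]; push_cast; ring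
    have hKpos : (0:ℝ) < K := by rw [hKdef]; positivity
    clear_value K
    by_cases hcase : ∃ p ∈ A ×ˢ R, (∑ g ∈ R, v p.1 g) ≤ 2 * K * v p.1 p.2
    · -- greedy phase: give a single high-value good
      obtain ⟨⟨j, g⟩, hmemD, hmax⟩ := Finset.exists_max_image
        ((A ×ˢ R).filter (fun p => (∑ g' ∈ R, v p.1 g') ≤ 2 * K * v p.1 p.2))
        (fun p => v p.1 p.2) (by
          obtain ⟨p, hp, hple⟩ := hcase
          exact ⟨p, Finset.mem_filter.2 ⟨hp, hple⟩⟩)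
      rw [Finset.mem_filter, Finset.mem_product] at hmemD
      obtain ⟨⟨hjA, hgR⟩, hjg⟩ := hmemD
      simp only at hjg
      have hA' : (A.erase j).card = k + 1 := by
        rw [Finset.card_erase_of_mem hjA, hA]
        omega
      obtain ⟨B', hB'sub, hB'disj, hB'out, hB'cov, hB'mms, hB'wel⟩ := ih (A.erase j) (R.erase g) hA'
      refine ⟨fun x => if x = j then {g} else B' x, ?_, ?_, ?_, ?_, ?_, ?_⟩
      · intro x; dsimp only; split
        · simpa using hgR
        · exact (hB'sub x).trans (Finset.erase_subset _ _)
      · intro a b hab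
        dsimp only
        by_cases ha : a = j <;> by_cases hb : b = j
        · exact absurd (ha.trans hb.symm) hab
        · rw [if_pos ha, if_neg hb, Finset.disjoint_singleton_left]
          exact fun hgb => (Finset.mem_erase.1 (hB'sub b hgb)).1 rfl
        · rw [if_neg ha, if_pos hb, Finset.disjoint_singleton_right]
          exact fun hga => (Finset.mem_erase.1 (hB'sub a hga)).1 rfl
        · rw [if_neg ha, if_neg hb]
          exact hB'disj a b hab
      · intro x hx
        have hxj : x ≠ j := fun h => hx (h ▸ hjA)
        dsimp only; rw [if_neg hxj]
        exact hB'out x (fun h => hx (Finset.mem_of_mem_erase h))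
      · have hins : A = insert j (A.erase j) := (Finset.insert_erase hjA).symm
        rw [hins, Finset.biUnion_insert, if_pos rfl]
        have heq : (A.erase j).biUnion (fun x => if x = j then {g} else B' x)
            = (A.erase j).biUnion B' := by
          refine Finset.biUnion_congr rfl (fun x hx => ?_)
          rw [if_neg (Finset.ne_of_mem_erase hx)]
        rw [heq, hB'cov, ← Finset.insert_eq, Finset.insert_erase hgR]
      · intro l hl
        by_cases hlj : l = j
        · subst hlj
          dsimp only; rw [if_pos rfl, Finset.sum_singleton]
          have h1 := mms_mul_le_sum (v l) (hv l) (Nat.succ_pos (k+1)) R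
          rw [hK2] at h1
          have h1' : K * MMSval (v l) (k+1+1) R ≤ ∑ g' ∈ R, v l g' := h1
          nlinarith [h1', hjg, hKpos]
        · dsimp only; rw [if_neg hlj]
          have h1 := mms_erase (v l) (hv l) (Nat.succ_pos k) R hgR
          have h2 := hB'mms l (Finset.mem_erase.2 ⟨hlj, hl⟩)
          linarith
      · -- welfare
        have hins : A = insert j (A.erase j) := (Finset.insert_erase hjA).symm
        have hsplitB : ∑ i ∈ A, ∑ g' ∈ (if i = j then {g} else B' i), v i g'
            = v j g + ∑ l ∈ A.erase j, ∑ g' ∈ B' l, v l g' := by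
          conv_lhs => rw [hins]
          rw [Finset.sum_insert (Finset.notMem_erase _ _), if_pos rfl,
            Finset.sum_singleton]
          congr 1
          refine Finset.sum_congr rfl (fun l hl => ?_)
          rw [if_neg (Finset.ne_of_mem_erase hl)]
        have hsplitR : ∑ i ∈ A, ∑ g' ∈ R, v i g'
            = ∑ g' ∈ R, v j g' + ∑ l ∈ A.erase j, ∑ g' ∈ R, v l g' := by
          conv_lhs => rw [hins]
          rw [Finset.sum_insert (Finset.notMem_erase _ _)]
        -- notation
        set x : ℝ := v j g with hxdef
        set T : ℝ := ∑ l ∈ A.erase j, ∑ g' ∈ B' l, v l g' with hT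
        have hxnn : 0 ≤ x := hv j g
        -- IH welfare, with R.erase g sums rewritten
        have hIH : ∑ l ∈ A.erase j, ((∑ g' ∈ R, v l g') - v l g) ≤ 3 * ((k:ℝ) + 1) * T := by
          refine le_trans (le_of_eq ?_) hB'wel
          refine Finset.sum_congr rfl (fun l hl => ?_)
          have := Finset.sum_erase_add R (v l) hgR
          linarith
        -- per-agent inequality
        have hper : ∀ l ∈ A.erase j,
            3 * ((k:ℝ) + 1) * (∑ g' ∈ R, v l g')
              ≤ 3 * K * ((∑ g' ∈ R, v l g') - v l g) + 3 * K * x := by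
          intro l hl
          have hlA := Finset.mem_of_mem_erase hl
          have hSnn : (0:ℝ) ≤ ∑ g' ∈ R, v l g' := Finset.sum_nonneg (fun g' _ => hv l g')
          have hvnn : (0:ℝ) ≤ v l g := hv l g
          by_cases hsat : (∑ g' ∈ R, v l g') ≤ 2 * K * v l g
          · have hle : v l g ≤ x := by
              have := hmax (l, g) (Finset.mem_filter.2 ⟨Finset.mem_product.2 ⟨hlA, hgR⟩, hsat⟩)
              simpa using this
            have hKK : 3 * ((k:ℝ) + 1) ≤ 3 * K := by rw [hKdef]; linarith
            nlinarith [hKK, hle, hSnn, hKpos]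
          · push_neg at hsat
            have hKk : K = (k:ℝ) + 2 := hKdef
            nlinarith [hsat, hxnn, hSnn, hvnn, hKpos]
        have hsum := Finset.sum_le_sum hper
        rw [Finset.sum_add_distrib] at hsum
        have hcard : ∑ _l ∈ A.erase j, 3 * K * x = ((k:ℝ) + 1) * (3 * K * x) := by
          rw [Finset.sum_const, hA', nsmul_eq_mul]
          push_cast; ring
        rw [hcard] at hsum
        have hmulsum : ∑ l ∈ A.erase j, 3 * K * ((∑ g' ∈ R, v l g') - v l g)
            = 3 * K * ∑ l ∈ A.erase j, ((∑ g' ∈ R, v l g') - v l g) := by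
          rw [Finset.mul_sum]
        rw [hmulsum] at hsum
        -- j's own part
        have hj3 : 3 * ((k:ℝ) + 1) * (∑ g' ∈ R, v j g') ≤ 3 * ((k:ℝ)+1) * (2 * K * x) := by
          have h3 : (0:ℝ) ≤ 3 * ((k:ℝ)+1) := by positivity
          nlinarith [hjg, h3]
        -- combine: multiply target by (k+1) > 0
        have hK3 : ((↑(k+1) : ℝ) + 1) = K := by rw [hKdef]; push_cast; ring
        rw [hsplitB, hsplitR, hK3]
        have hk1pos : (0:ℝ) < (k:ℝ) + 1 := by positivity
        apply le_of_mul_le_mul_left ?_ (by positivity : (0:ℝ) < 3 * ((k:ℝ)+1))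
        have hfin : 3 * ((k:ℝ)+1) * ∑ l ∈ A.erase j, ∑ g' ∈ R, v l g'
            ≤ 3 * K * (3 * ((k:ℝ)+1) * T) + ((k:ℝ)+1) * (3 * K * x) := by
          calc 3 * ((k:ℝ)+1) * ∑ l ∈ A.erase j, ∑ g' ∈ R, v l g'
              = ∑ l ∈ A.erase j, 3 * ((k:ℝ)+1) * (∑ g' ∈ R, v l g') := by rw [Finset.mul_sum]
            _ ≤ 3 * K * ∑ l ∈ A.erase j, ((∑ g' ∈ R, v l g') - v l g) + ((k:ℝ)+1) * (3 * K * x) := hsum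
            _ ≤ 3 * K * (3 * ((k:ℝ)+1) * T) + ((k:ℝ)+1) * (3 * K * x) := by
                have := mul_le_mul_of_nonneg_left hIH (by positivity : (0:ℝ) ≤ 3 * K)
                linarith
        nlinarith [hfin, hj3, hxnn, hKpos, hk1pos]
    · -- bag filling phase
      push_neg at hcase
      have hitem : ∀ i ∈ A, ∀ g ∈ R, v i g ≤ (∑ g' ∈ R, v i g') / (2 * K) := by
        intro i hi g hg
        have := hcase (i, g) (Finset.mem_product.2 ⟨hi, hg⟩)
        simp only at this
        rw [le_div_iff₀ (by linarith : (0:ℝ) < 2 * K)]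
        nlinarith [this]
      obtain ⟨B, hBsub, hBdisj, hBout, hBcov, hBval⟩ := bagfill v hv (k+1) A R
        (fun i => (∑ g' ∈ R, v i g') / (2 * K)) hA
        (fun i _ => div_nonneg (Finset.sum_nonneg (fun g' _ => hv i g')) (by linarith))
        hitem
        (fun i hi => by
          have hSnn : (0:ℝ) ≤ ∑ g' ∈ R, v i g' := Finset.sum_nonneg (fun g' _ => hv i g')
          rw [hKdef, div_eq_mul_inv, ← mul_assoc,
            mul_inv_le_iff₀ (by positivity : (0:ℝ) < 2 * ((k:ℝ)+2))]
          push_cast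
          nlinarith [hSnn])
      refine ⟨B, hBsub, hBdisj, hBout, hBcov, ?_, ?_⟩
      · intro i hi
        have h1 := mms_mul_le_sum (v i) (hv i) (Nat.succ_pos (k+1)) R
        rw [hK2] at h1
        have h1' : K * MMSval (v i) (k+1+1) R ≤ ∑ g ∈ R, v i g := h1
        have h2 := hBval i hi
        rw [div_le_iff₀ (by linarith : (0:ℝ) < 2 * K)] at h2
        nlinarith [h1', h2, hKpos]
      · have hsum := Finset.sum_le_sum hBval
        have hdiv : ∑ i ∈ A, (∑ g' ∈ R, v i g') / (2 * K)
            = (∑ i ∈ A, ∑ g' ∈ R, v i g') / (2 * K) := by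
          rw [Finset.sum_div]
        rw [hdiv] at hsum
        rw [div_le_iff₀ (by linarith : (0:ℝ) < 2 * K)] at hsum
        have hSnn : (0:ℝ) ≤ ∑ i ∈ A, ∑ g' ∈ R, v i g' :=
          Finset.sum_nonneg (fun i _ => Finset.sum_nonneg (fun g' _ => hv i g'))
        have hBnn : (0:ℝ) ≤ ∑ i ∈ A, ∑ g ∈ B i, v i g :=
          Finset.sum_nonneg (fun i _ => Finset.sum_nonneg (fun g' _ => hv i g'))
        rw [hKdef] at hsum
        push_cast
        nlinarith [hsum, hBnn, mul_nonneg (Nat.cast_nonneg k : (0:ℝ) ≤ (k:ℝ)) hBnn]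

/-- For every fair division instance with `n` agents having additive
valuations (nonnegative item values), there exists a `1/2`-MMS allocation `B` with
social welfare at least `(1/(3n)) ∑ i, v i [m]`. -/
theorem exists_half_mms_allocation_welfare_ge
    (n m : ℕ) (hn : 1 ≤ n)
    (v : Fin n → Fin m → ℝ) (hv : ∀ i g, 0 ≤ v i g) :
    ∃ B : Fin n → Finset (Fin m),
      (∀ a b : Fin n, a ≠ b → Disjoint (B a) (B b)) ∧
      Finset.univ.biUnion B = Finset.univ ∧
      (∀ i : Fin n, (1 / 2) * MMSval (v i) n Finset.univ ≤ ∑ g ∈ B i, v i g) ∧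
      (1 / (3 * (n : ℝ))) * (∑ i, ∑ g : Fin m, v i g) ≤ ∑ i, ∑ g ∈ B i, v i g := by
  have hn1 : n - 1 + 1 = n := by omega
  obtain ⟨B, hsub, hdisj, hout, hcov, hmms, hwel⟩ :=
    main_alloc v hv (n - 1) Finset.univ Finset.univ (by
      rw [Finset.card_univ, Fintype.card_fin]; omega)
  have hc : ((n - 1 : ℕ) : ℝ) + 1 = (n : ℝ) := by
    exact_mod_cast congrArg (Nat.cast : ℕ → ℝ) hn1
  have hnpos : (0 : ℝ) < (n : ℝ) := by exact_mod_cast hn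
  refine ⟨B, hdisj, hcov, ?_, ?_⟩
  · intro i
    have h := hmms i (Finset.mem_univ i)
    rw [hn1] at h
    linarith
  · rw [hc] at hwel
    rw [div_mul_eq_mul_div, div_le_iff₀ (by positivity : (0:ℝ) < 3 * (n:ℝ))]
    linarith
end

section
/- The price of 1/2-MMS for unscaled additive valuations is Ω(n): for every ε ∈ (0,1), in the instance with n agents and n goods where agent 1 values each good at 1 and every other agent values each good at ε, every 1/2-MMS allocation assigns at least one good to every agent and hence has social welfare at most 1 + (n−1)·ε + (something ≤ 0), while the optimal social welfare is n; thus the ratio is at least n/(1+(n−1)ε). -/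
/-!
Every agent values every good positively, so the partition into singletons gives each agent a
positive maximin share, and a 1/2-MMS allocation must give every agent a nonempty bundle. With as
many goods as agents, every bundle is then a single good, so the welfare is `1 + (n - 1) ε`.
-/

open Finset

section MMSval

variable {m k : ℕ} (v : Fin m → ℝ)

lemma iInf_sum_le_sum_abs (P : Fin k → Finset (Fin m)) :
    ⨅ j, ∑ g ∈ P j, v g ≤ ∑ g, |v g| := by
  rcases isEmpty_or_nonempty (Fin k) with _ | ⟨⟨j⟩⟩
  · rw [Real.iInf_of_isEmpty]; positivity
  · calc ⨅ j, ∑ g ∈ P j, v g ≤ ∑ g ∈ P j, v g := ciInf_le (Finite.bddBelow_range _) j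
    _ ≤ ∑ g ∈ P j, |v g| := sum_le_sum fun g _ => le_abs_self (v g)
    _ ≤ ∑ g, |v g| := sum_le_sum_of_subset_of_nonneg (subset_univ _) fun g _ _ => abs_nonneg _

lemma iInf_sum_le_MMSval {G : Finset (Fin m)} (P : Fin k → Finset (Fin m))
    (hdisj : ∀ a b : Fin k, a ≠ b → Disjoint (P a) (P b)) (hcover : univ.biUnion P = G) :
    ⨅ j, ∑ g ∈ P j, v g ≤ MMSval v k G :=
  le_ciSup (f := fun P : {P : Fin k → Finset (Fin m) //
      (∀ a b : Fin k, a ≠ b → Disjoint (P a) (P b)) ∧ univ.biUnion P = G} =>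
        ⨅ j, ∑ g ∈ P.1 j, v g)
    ⟨∑ g, |v g|, by rintro _ ⟨P, rfl⟩; exact iInf_sum_le_sum_abs v P.1⟩ ⟨P, hdisj, hcover⟩

lemma iInf_le_MMSval_self : ⨅ g, v g ≤ MMSval v m univ := by
  simpa using iInf_sum_le_MMSval v (fun g => {g})
    (fun a b hab => disjoint_singleton.2 hab) (by ext; simp)

lemma MMSval_self_pos [NeZero m] (hv : ∀ g, 0 < v g) : 0 < MMSval v m univ := by
  obtain ⟨g, hg⟩ := exists_eq_ciInf_of_finite (f := v)
  exact (hv g).trans_le (hg ▸ iInf_le_MMSval_self v)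

lemma nonempty_of_half_MMSval_le [NeZero m] (hv : ∀ g, 0 < v g) {S : Finset (Fin m)}
    (h : 1 / 2 * MMSval v m univ ≤ ∑ g ∈ S, v g) : S.Nonempty := by
  refine nonempty_of_sum_ne_zero (f := v) (ne_of_gt ?_)
  linarith [MMSval_self_pos v hv]

end MMSval

lemma card_eq_one_of_pairwise_disjoint_of_card_biUnion {ι α : Type*} [Fintype ι]
    [DecidableEq α] {B : ι → Finset α} (hdisj : ∀ a b, a ≠ b → Disjoint (B a) (B b))
    (hne : ∀ i, (B i).Nonempty) (hcard : #(univ.biUnion B) = Fintype.card ι) (i : ι) :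
    #(B i) = 1 := by
  have hsum : ∑ _j : ι, 1 = ∑ j, #(B j) := by
    rw [← card_biUnion fun a _ b _ hab => hdisj a b hab, hcard]; simp
  exact ((sum_eq_sum_iff_of_le fun j _ => (hne j).card_pos).1 hsum i (mem_univ i)).symm

lemma sum_ite_val_eq_zero {n : ℕ} (hn : 1 ≤ n) (a b : ℝ) :
    ∑ i : Fin n, (if (i : ℕ) = 0 then a else b) = a + ((n : ℝ) - 1) * b := by
  obtain ⟨k, rfl⟩ := Nat.exists_eq_add_of_le' hn
  simp [Fin.sum_univ_succ]

theorem price_of_half_mms_unscaled_lower_bound_general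
    (n : ℕ) (hn : 1 ≤ n) (ε : ℝ) (hε : 0 < ε)
    (v : Fin n → Fin n → ℝ)
    (hv : ∀ i g, v i g = if (i : ℕ) = 0 then 1 else ε) :
    (∑ g : Fin n, v ⟨0, hn⟩ g = (n : ℝ)) ∧
    (∀ B : Fin n → Finset (Fin n),
      (∀ a b : Fin n, a ≠ b → Disjoint (B a) (B b)) →
      Finset.univ.biUnion B = Finset.univ →
      (∀ i : Fin n, (1 / 2) * MMSval (v i) n Finset.univ ≤ ∑ g ∈ B i, v i g) →
      (∀ i : Fin n, (B i).Nonempty) ∧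
        ∑ i, ∑ g ∈ B i, v i g ≤ 1 + ((n : ℝ) - 1) * ε) := by
  have : NeZero n := ⟨by omega⟩
  have hpos : ∀ i g, 0 < v i g := fun i g => by rw [hv]; split_ifs <;> linarith
  refine ⟨by simp [hv], fun B hdisj hcover hmms => ?_⟩
  have hne : ∀ i, (B i).Nonempty := fun i => nonempty_of_half_MMSval_le (v i) (hpos i) (hmms i)
  have hsingle : ∀ i, #(B i) = 1 :=
    card_eq_one_of_pairwise_disjoint_of_card_biUnion hdisj hne (by simp [hcover])
  refine ⟨hne, le_of_eq ?_⟩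
  calc ∑ i, ∑ g ∈ B i, v i g = ∑ i : Fin n, (if (i : ℕ) = 0 then 1 else ε) :=
        sum_congr rfl fun i _ => by
          obtain ⟨g, hg⟩ := card_eq_one.1 (hsingle i)
          rw [hg, sum_singleton, hv]
    _ = 1 + ((n : ℝ) - 1) * ε := sum_ite_val_eq_zero hn 1 ε

/-- Price of 1/2-MMS for unscaled additive valuations is Ω(n). In the
instance with `n` agents and `n` goods where agent 1 (index 0) values each good at `1`
and every other agent values each good at `ε ∈ (0,1)`, every 1/2-MMS allocation gives
every agent a nonempty bundle and has social welfare at most `1 + (n−1)·ε`, while the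
optimal social welfare is `n` (all goods to agent 1). -/
theorem price_of_half_mms_unscaled_lower_bound
    (n : ℕ) (hn : 1 ≤ n) (ε : ℝ) (hε : 0 < ε) (hε1 : ε < 1)
    (v : Fin n → Fin n → ℝ)
    (hv : ∀ i g, v i g = if (i : ℕ) = 0 then 1 else ε) :
    (∑ g : Fin n, v ⟨0, hn⟩ g = (n : ℝ)) ∧
    (∀ B : Fin n → Finset (Fin n),
      (∀ a b : Fin n, a ≠ b → Disjoint (B a) (B b)) →
      Finset.univ.biUnion B = Finset.univ →
      (∀ i : Fin n, (1 / 2) * MMSval (v i) n Finset.univ ≤ ∑ g ∈ B i, v i g) →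
      (∀ i : Fin n, (B i).Nonempty) ∧
        ∑ i, ∑ g ∈ B i, v i g ≤ 1 + ((n : ℝ) - 1) * ε) :=
  price_of_half_mms_unscaled_lower_bound_general n hn ε hε v hv
end

section
/- In the instance with n agents (√n an integer) and n goods where for i ≤ √n agent i values each of the √n goods in block T_i = {(i−1)√n+1,...,i√n} at 1/√n and all other goods at 0, and for i > √n agent i values every good at 1/n: every 1/2-MMS allocation has social welfare at most 2, while the optimal social welfare is at least √n. Hence the price of 1/2-MMS for scaled additive valuations is Ω(√n). -/
open Finset

/-- Price of 1/2-MMS for scaled additive valuations is Ω(√n). Let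
`n = s²`. High agents `i < s` value each good in their block
`T i = {i·s, ..., (i+1)·s − 1}` at `1/s` and other goods at `0`; low agents `i ≥ s`
value every good at `1/n`. Then some allocation achieves social welfare at least
`s = √n`, while every 1/2-MMS allocation has social welfare at most `2`. -/
theorem price_of_half_mms_scaled_lower_bound
    (s : ℕ) (hs : 1 ≤ s)
    (v : Fin (s ^ 2) → Fin (s ^ 2) → ℝ)
    (hv : ∀ i g, v i g =
      if (i : ℕ) < s then
        (if (i : ℕ) * s ≤ (g : ℕ) ∧ (g : ℕ) < ((i : ℕ) + 1) * s
          then 1 / (s : ℝ) else 0)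
      else 1 / ((s : ℝ) ^ 2)) :
    (∃ B : Fin (s ^ 2) → Finset (Fin (s ^ 2)),
      (∀ a b, a ≠ b → Disjoint (B a) (B b)) ∧
      Finset.univ.biUnion B = Finset.univ ∧
      (s : ℝ) ≤ ∑ i, ∑ g ∈ B i, v i g) ∧
    (∀ B : Fin (s ^ 2) → Finset (Fin (s ^ 2)),
      (∀ a b, a ≠ b → Disjoint (B a) (B b)) →
      Finset.univ.biUnion B = Finset.univ →
      (∀ i, (1 / 2) * MMSval (v i) (s ^ 2) Finset.univ ≤ ∑ g ∈ B i, v i g) →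
      ∑ i, ∑ g ∈ B i, v i g ≤ 2) := by
  have hs0 : 0 < s := hs
  have hsR : (0:ℝ) < (s:ℝ) := by exact_mod_cast hs0
  have hn : 0 < s ^ 2 := by positivity
  have hcardH : (univ.filter (fun i : Fin (s^2) => (i:ℕ) < s)).card = s := by
    have h1 : univ.filter (fun i : Fin (s^2) => (i:ℕ) < s)
        = (Finset.range s).attachFin (fun m hm => by
            have h2 : m < s := Finset.mem_range.mp hm
            exact lt_of_lt_of_le h2 (Nat.le_self_pow two_ne_zero s)) := by
      ext g
      simp [Finset.mem_attachFin]
    rw [h1, Finset.card_attachFin, Finset.card_range]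
  have hblock : ∀ k : ℕ, k < s →
      (univ.filter (fun g : Fin (s^2) => k*s ≤ (g:ℕ) ∧ (g:ℕ) < (k+1)*s)).card = s := by
    intro k hk
    have hbd : ∀ m ∈ Finset.Ico (k*s) ((k+1)*s), m < s^2 := by
      intro m hm
      have h2 := (Finset.mem_Ico.mp hm).2
      have h3 : (k+1)*s ≤ s*s := Nat.mul_le_mul_right s hk
      calc m < (k+1)*s := h2
        _ ≤ s*s := h3
        _ = s^2 := (sq s).symm
    have h1 : univ.filter (fun g : Fin (s^2) => k*s ≤ (g:ℕ) ∧ (g:ℕ) < (k+1)*s)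
        = (Finset.Ico (k*s) ((k+1)*s)).attachFin hbd := by
      ext g; simp [Finset.mem_attachFin, Finset.mem_Ico]
    rw [h1, Finset.card_attachFin, Nat.card_Ico, Nat.add_mul, one_mul,
      Nat.add_sub_cancel_left]
  constructor
  · -- existence of a good allocation
    refine ⟨fun i => if (i:ℕ) < s then
        univ.filter (fun g : Fin (s^2) => (i:ℕ)*s ≤ (g:ℕ) ∧ (g:ℕ) < ((i:ℕ)+1)*s)
      else ∅, ?_, ?_, ?_⟩
    · intro a b hab
      dsimp only
      split_ifs with ha hb hb
      · rw [Finset.disjoint_left]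
        intro g hg hg'
        simp only [Finset.mem_filter] at hg hg'
        refine hab (Fin.ext ?_)
        have e1 := Nat.div_eq_of_lt_le hg.2.1 hg.2.2
        have e2 := Nat.div_eq_of_lt_le hg'.2.1 hg'.2.2
        omega
      all_goals simp
    · ext g
      simp only [Finset.mem_biUnion, Finset.mem_univ, iff_true, true_and]
      have hglt : (g:ℕ) < s^2 := g.2
      refine ⟨⟨(g:ℕ)/s, lt_of_le_of_lt (Nat.div_le_self _ _) hglt⟩, ?_⟩
      have hds : (g:ℕ)/s < s := by
        rw [Nat.div_lt_iff_lt_mul hs0]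
        calc (g:ℕ) < s^2 := hglt
          _ = s*s := sq s
      have h1 : (g:ℕ)/s*s ≤ (g:ℕ) := Nat.div_mul_le_self _ _
      have h2 : (g:ℕ) < ((g:ℕ)/s+1)*s := by
        have hm := Nat.mod_lt (g:ℕ) hs0
        have hd : (g:ℕ)/s * s + (g:ℕ)%s = (g:ℕ) := Nat.div_add_mod' _ _
        rw [Nat.add_mul, one_mul]
        omega
      simp only [hds, if_pos, Finset.mem_filter, Finset.mem_univ, true_and]
      exact ⟨h1, h2⟩
    · have key : ∀ i : Fin (s^2),
          (∑ g ∈ (if (i:ℕ) < s then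
              univ.filter (fun g : Fin (s^2) => (i:ℕ)*s ≤ (g:ℕ) ∧ (g:ℕ) < ((i:ℕ)+1)*s)
            else ∅), v i g) = if (i:ℕ) < s then (1:ℝ) else 0 := by
        intro i
        split_ifs with hi
        · have hval : ∀ g ∈ univ.filter
              (fun g : Fin (s^2) => (i:ℕ)*s ≤ (g:ℕ) ∧ (g:ℕ) < ((i:ℕ)+1)*s),
              v i g = 1/(s:ℝ) := by
            intro g hg
            simp only [Finset.mem_filter] at hg
            rw [hv]; simp [hi, hg.2.1, hg.2.2]
          rw [Finset.sum_congr rfl hval, Finset.sum_const, hblock (i:ℕ) hi,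
            nsmul_eq_mul]
          field_simp
        · simp
      show (s:ℝ) ≤ ∑ i : Fin (s^2), ∑ g ∈ (if (i:ℕ) < s then
          univ.filter (fun g : Fin (s^2) => (i:ℕ)*s ≤ (g:ℕ) ∧ (g:ℕ) < ((i:ℕ)+1)*s)
        else ∅), v i g
      refine le_of_eq ?_
      calc (s:ℝ) = ((univ.filter (fun i : Fin (s^2) => (i:ℕ) < s)).card : ℝ) := by
            rw [hcardH]
        _ = ∑ i : Fin (s^2), (if (i:ℕ) < s then (1:ℝ) else 0) := by
            rw [Finset.sum_boole]
        _ = _ := (Finset.sum_congr rfl (fun i _ => (key i).symm))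
  · -- every 1/2-MMS allocation has welfare ≤ 2
    intro B hdisj hcov hmms
    haveI : Nonempty (Fin (s^2)) := ⟨⟨0, hn⟩⟩
    have hvnn : ∀ i g, 0 ≤ v i g := by
      intro i g; rw [hv]
      split_ifs <;> positivity
    have key_low : ∀ i : Fin (s^2), s ≤ (i:ℕ) →
        (1:ℝ)/((s:ℝ)^2) ≤ MMSval (v i) (s^2) univ := by
      intro i hi
      have hiv : ∀ g, v i g = 1/((s:ℝ)^2) := by
        intro g; rw [hv]; simp [Nat.not_lt.mpr hi]
      unfold MMSval
      have hbdd : BddAbove (Set.range (fun P : {P : Fin (s^2) → Finset (Fin (s^2)) //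
          (∀ a b : Fin (s^2), a ≠ b → Disjoint (P a) (P b)) ∧
            Finset.univ.biUnion P = Finset.univ} =>
          ⨅ j : Fin (s^2), ∑ g ∈ P.1 j, v i g)) := by
        refine ⟨∑ g, v i g, ?_⟩
        rintro x ⟨P, rfl⟩
        refine le_trans (ciInf_le (Set.Finite.bddBelow (Set.finite_range _)) ⟨0, hn⟩) ?_
        exact Finset.sum_le_sum_of_subset_of_nonneg (Finset.subset_univ _)
          (fun g _ _ => hvnn i g)
      have hP : (∀ a b : Fin (s^2), a ≠ b →
            Disjoint ((fun j => ({j} : Finset (Fin (s^2)))) a)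
              ((fun j => ({j} : Finset (Fin (s^2)))) b)) ∧
          Finset.univ.biUnion (fun j => ({j} : Finset (Fin (s^2)))) = Finset.univ := by
        constructor
        · intro a b hab; exact Finset.disjoint_singleton.mpr hab
        · ext g; simp
      refine le_trans ?_ (le_ciSup hbdd ⟨fun j => {j}, hP⟩)
      refine le_ciInf (fun j => ?_)
      simp [hiv]
    have hBne : ∀ i : Fin (s^2), s ≤ (i:ℕ) → 1 ≤ (B i).card := by
      intro i hi
      rcases Finset.eq_empty_or_nonempty (B i) with h | h
      · exfalso
        have h1 := hmms i
        rw [h, Finset.sum_empty] at h1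
        have h2 := key_low i hi
        have h3 : (0:ℝ) < 1/((s:ℝ)^2) := by positivity
        linarith
      · exact Finset.one_le_card.mpr h
    have hsumcard : ∑ i, (B i).card = s^2 := by
      have h := Finset.card_biUnion (s := (univ : Finset (Fin (s^2)))) (t := B)
        (fun a _ b _ h => hdisj a b h)
      rw [hcov] at h
      simpa using h.symm
    have hH : ∀ i : Fin (s^2), (i:ℕ) < s →
        ∑ g ∈ B i, v i g ≤ ((B i).card : ℝ) * (1/(s:ℝ)) := by
      intro i hi
      calc ∑ g ∈ B i, v i g ≤ ∑ _g ∈ B i, 1/(s:ℝ) := by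
            refine Finset.sum_le_sum (fun g _ => ?_)
            rw [hv]
            simp only [hi, if_true]
            split_ifs
            · exact le_refl _
            · positivity
        _ = ((B i).card : ℝ) * (1/(s:ℝ)) := by rw [Finset.sum_const, nsmul_eq_mul]
    have hL : ∀ i : Fin (s^2), ¬((i:ℕ) < s) →
        ∑ g ∈ B i, v i g = ((B i).card : ℝ) * (1/((s:ℝ)^2)) := by
      intro i hi
      have hc : ∀ g ∈ B i, v i g = 1/((s:ℝ)^2) := fun g _ => by rw [hv]; simp [hi]
      rw [Finset.sum_congr rfl hc, Finset.sum_const, nsmul_eq_mul]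
    set H := univ.filter (fun i : Fin (s^2) => (i:ℕ) < s) with hHdef
    set L := univ.filter (fun i : Fin (s^2) => ¬(i:ℕ) < s) with hLdef
    have hLcard : L.card = s^2 - s := by
      have h := Finset.card_filter_add_card_filter_not
        (s := (univ : Finset (Fin (s^2)))) (fun i : Fin (s^2) => (i:ℕ) < s)
      rw [Finset.card_univ, Fintype.card_fin] at h
      rw [← hHdef, ← hLdef] at h
      omega
    have hscard : ∑ i ∈ H, (B i).card + ∑ i ∈ L, (B i).card = s^2 := by
      rw [hHdef, hLdef, Finset.sum_filter_add_sum_filter_not, hsumcard]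
    have hLlow : s^2 - s ≤ ∑ i ∈ L, (B i).card := by
      calc s^2 - s = L.card * 1 := by rw [hLcard, mul_one]
        _ = ∑ _i ∈ L, 1 := by rw [Finset.sum_const, smul_eq_mul]
        _ ≤ ∑ i ∈ L, (B i).card := by
            refine Finset.sum_le_sum (fun i hi => ?_)
            simp only [hLdef, Finset.mem_filter] at hi
            exact hBne i (Nat.not_lt.mp hi.2)
    have hLhigh : ∑ i ∈ L, (B i).card ≤ s^2 := by omega
    have hHsum : ∑ i ∈ H, (B i).card ≤ s := by
      have h2 : s ≤ s^2 := Nat.le_self_pow two_ne_zero s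
      omega
    have t1 : ∑ i ∈ H, ∑ g ∈ B i, v i g ≤ 1 := by
      have c1 : (∑ i ∈ H, ((B i).card : ℝ)) ≤ (s:ℝ) := by exact_mod_cast hHsum
      calc ∑ i ∈ H, ∑ g ∈ B i, v i g
          ≤ ∑ i ∈ H, ((B i).card : ℝ) * (1/(s:ℝ)) := by
            refine Finset.sum_le_sum (fun i hi => ?_)
            simp only [hHdef, Finset.mem_filter] at hi
            exact hH i hi.2
        _ = (∑ i ∈ H, ((B i).card : ℝ)) * (1/(s:ℝ)) := by rw [← Finset.sum_mul]
        _ ≤ (s:ℝ) * (1/(s:ℝ)) := by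
            exact mul_le_mul_of_nonneg_right c1 (by positivity)
        _ = 1 := by field_simp
    have t2 : ∑ i ∈ L, ∑ g ∈ B i, v i g ≤ 1 := by
      have c2 : (∑ i ∈ L, ((B i).card : ℝ)) ≤ ((s:ℝ)^2) := by exact_mod_cast hLhigh
      calc ∑ i ∈ L, ∑ g ∈ B i, v i g
          = ∑ i ∈ L, ((B i).card : ℝ) * (1/((s:ℝ)^2)) := by
            refine Finset.sum_congr rfl (fun i hi => ?_)
            simp only [hLdef, Finset.mem_filter] at hi
            exact hL i hi.2
        _ = (∑ i ∈ L, ((B i).card : ℝ)) * (1/((s:ℝ)^2)) := by rw [← Finset.sum_mul]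
        _ ≤ ((s:ℝ)^2) * (1/((s:ℝ)^2)) := by
            exact mul_le_mul_of_nonneg_right c2 (by positivity)
        _ = 1 := by field_simp
    calc ∑ i, ∑ g ∈ B i, v i g
        = ∑ i ∈ H, ∑ g ∈ B i, v i g + ∑ i ∈ L, ∑ g ∈ B i, v i g := by
          rw [hHdef, hLdef, Finset.sum_filter_add_sum_filter_not]
      _ ≤ 2 := by linarith
end
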